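/- arXiv:nlin/0312013 — 8 statements merged into one kernel-verified Lean document; each statement's English description precedes it below -/
import Mathlib

section
/- Let p₀, u, r : ℝ² → ℝ be continuously differentiable functions of (x,y) such that: (a) ∂_y p₀ = ∂_x(p₀² + 2u) and ∂_y u = 2 ∂_x(p₀ u) (the dispersionless NLS / one-component Zakharov system); (b) (r − p₀)² = u everywhere (i.e., r is a critical point of the Sato function z(p) = p + u/(p − p₀), since ∂z/∂p = 1 − u/(p − p₀)² vanishes at p = r); and (c) r(x,y) ≠ p₀(x,y) for all (x,y). Then the function λ := r + u/(r − p₀) = 2r − p₀ is a Riemann invariant: it satisfies ∂_y λ = 2 r ∂_x λ. -/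
/-- For the Zakharov reduction of dKP with Sato function `z(p) = p + u/(p - p₀)`,
the critical value `λ = r + u/(r - p₀)` at a critical point `r` (where
`(r - p₀)² = u`) is a Riemann invariant: `∂_y λ = 2 r ∂_x λ`. -/
theorem stmt1
    (p₀ u r : ℝ → ℝ → ℝ)
    (hp₀ : ContDiff ℝ 1 (fun v : ℝ × ℝ => p₀ v.1 v.2))
    (hu : ContDiff ℝ 1 (fun v : ℝ × ℝ => u v.1 v.2))
    (hr : ContDiff ℝ 1 (fun v : ℝ × ℝ => r v.1 v.2))
    -- (a) the dispersionless NLS / one-component Zakharov system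
    (ha1 : ∀ x y, deriv (fun y' => p₀ x y') y
      = deriv (fun x' => (p₀ x' y) ^ 2 + 2 * u x' y) x)
    (ha2 : ∀ x y, deriv (fun y' => u x y') y
      = 2 * deriv (fun x' => p₀ x' y * u x' y) x)
    -- (b) `r` is a critical point of the Sato function `z(p) = p + u/(p - p₀)`
    (hb : ∀ x y, (r x y - p₀ x y) ^ 2 = u x y)
    -- (c) nondegeneracy
    (hc : ∀ x y, r x y ≠ p₀ x y) :
    ∀ x y, deriv (fun y' => r x y' + u x y' / (r x y' - p₀ x y')) y
      = 2 * r x y * deriv (fun x' => r x' y + u x' y / (r x' y - p₀ x' y)) x := by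
  have Hx : ∀ (f : ℝ → ℝ → ℝ), ContDiff ℝ 1 (fun v : ℝ × ℝ => f v.1 v.2) →
      ∀ x y : ℝ, DifferentiableAt ℝ (fun x' => f x' y) x := by
    intro f hf x y
    exact ((hf.differentiable one_ne_zero) (x, y)).comp x
      (show DifferentiableAt ℝ (fun x' : ℝ => (x', y)) x from differentiableAt_id.prodMk (differentiableAt_const y))
  have Hy : ∀ (f : ℝ → ℝ → ℝ), ContDiff ℝ 1 (fun v : ℝ × ℝ => f v.1 v.2) →
      ∀ x y : ℝ, DifferentiableAt ℝ (fun y' => f x y') y := by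
    intro f hf x y
    exact ((hf.differentiable one_ne_zero) (x, y)).comp y
      ((differentiableAt_const _).prodMk differentiableAt_id)
  intro x y
  have hpx := (Hx p₀ hp₀ x y).hasDerivAt
  have hux := (Hx u hu x y).hasDerivAt
  have hrx := (Hx r hr x y).hasDerivAt
  have hpy := (Hy p₀ hp₀ x y).hasDerivAt
  have huy := (Hy u hu x y).hasDerivAt
  have hry := (Hy r hr x y).hasDerivAt
  set P := deriv (fun x' => p₀ x' y) x with hP
  set U := deriv (fun x' => u x' y) x with hU
  set R := deriv (fun x' => r x' y) x with hR
  set Py := deriv (fun y' => p₀ x y') y with hPy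
  set Uy := deriv (fun y' => u x y') y with hUy
  set Ry := deriv (fun y' => r x y') y with hRy
  set s := r x y - p₀ x y with hs
  have hs0 : s ≠ 0 := sub_ne_zero.mpr (hc x y)
  have hu2 : u x y = s ^ 2 := (hb x y).symm
  -- E1 : U = 2 s (R - P)
  have E1 : U = 2 * s * (R - P) := by
    have hfun : (fun x' => u x' y) = fun x' => (r x' y - p₀ x' y) ^ 2 := by
      funext x'; rw [hb]
    have h := ((hrx.sub hpx).pow 2).deriv
    rw [hU, hfun]
    erw [h]
    simp only [Pi.sub_apply, hs]
    push_cast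
    ring
  -- E2 : Uy = 2 s (Ry - Py)
  have E2 : Uy = 2 * s * (Ry - Py) := by
    have hfun : (fun y' => u x y') = fun y' => (r x y' - p₀ x y') ^ 2 := by
      funext y'; rw [hb]
    have h := ((hry.sub hpy).pow 2).deriv
    rw [hUy, hfun]
    erw [h]
    simp only [Pi.sub_apply, hs]
    push_cast
    ring
  -- E3 : Py = 2 p₀ P + 2 U
  have E3 : Py = 2 * p₀ x y * P + 2 * U := by
    have h := ((hpx.pow 2).add (hux.const_mul 2)).deriv
    rw [hPy, ha1 x y]
    erw [h]
    push_cast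
    ring
  -- E4 : Uy = 2 (P u + p₀ U)
  have E4 : Uy = 2 * (P * u x y + p₀ x y * U) := by
    have h := (hpx.mul hux).deriv
    rw [hUy, ha2 x y]
    erw [h]
  -- rewrite the functions: u/(r-p₀) = r - p₀
  have hfun1 : (fun y' => r x y' + u x y' / (r x y' - p₀ x y'))
      = fun y' => 2 * r x y' - p₀ x y' := by
    funext y'
    have h0 : r x y' - p₀ x y' ≠ 0 := sub_ne_zero.mpr (hc x y')
    rw [← hb x y', sq, mul_div_assoc, div_self h0, mul_one]
    ring
  have hfun2 : (fun x' => r x' y + u x' y / (r x' y - p₀ x' y))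
      = fun x' => 2 * r x' y - p₀ x' y := by
    funext x'
    have h0 : r x' y - p₀ x' y ≠ 0 := sub_ne_zero.mpr (hc x' y)
    rw [← hb x' y, sq, mul_div_assoc, div_self h0, mul_one]
    ring
  rw [hfun1, hfun2]
  have hd1 : deriv (fun y' => 2 * r x y' - p₀ x y') y = 2 * Ry - Py :=
    ((hry.const_mul 2).sub hpy).deriv
  have hd2 : deriv (fun x' => 2 * r x' y - p₀ x' y) x = 2 * R - P :=
    ((hrx.const_mul 2).sub hpx).deriv
  rw [hd1, hd2]
  -- algebra
  have key : (2 * s) * (Ry - Py) = (2 * s) * (P * s + 2 * p₀ x y * (R - P)) := by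
    linear_combination E2.symm + E4 + 2 * P * hu2 + 2 * (p₀ x y) * E1
  have key2 : Ry - Py = P * s + 2 * p₀ x y * (R - P) :=
    mul_left_cancel₀ (mul_ne_zero two_ne_zero hs0) key
  linear_combination 2 * key2 + E3 + 2 * E1 + (4 * R - 2 * P) * hs
end

section
/- Let N ≥ 1, let c₁,…,c_N be real constants, and let S₁,…,S_N, S̃₁,…,S̃_N and v be C² real-valued functions of (x,y,t) ∈ ℝ³. Define u = Σ_{i=1}^N c_i (∂_x S_i − ∂_x S̃_i), p_k = ∂_x S_k, p̃_k = ∂_x S̃_k, and B = Σ_{i=1}^N c_i (p_i² − p̃_i²). Assume: (a) ∂_y S_k = p_k² + 2u and ∂_y S̃_k = p̃_k² + 2u for every k; (b) ∂_t S_k = p_k³ + 3 u p_k + v and ∂_t S̃_k = p̃_k³ + 3 u p̃_k + v for every k; (c) ∂_x v = (3/2) ∂_y u. Then for every k: ∂_t p_k = ∂_x( p_k³ + 3 p_k u + (3/2) B ) and ∂_t p̃_k = ∂_x( p̃_k³ + 3 p̃_k u + (3/2) B ). -/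
abbrev E3 := ℝ × ℝ × ℝ

lemma sliceX {F : E3 → ℝ} {x y t : ℝ} (hF : DifferentiableAt ℝ F (x, y, t)) :
    HasDerivAt (fun x' => F (x', y, t)) (fderiv ℝ F (x, y, t) (1, 0, 0)) x := by
  have hc : HasDerivAt (fun x' : ℝ => ((x', y, t) : E3)) ((1:ℝ), (0:ℝ), (0:ℝ)) x :=
    (hasDerivAt_id x).prodMk (hasDerivAt_const _ _)
  exact hF.hasFDerivAt.comp_hasDerivAt x hc

lemma sliceY {F : E3 → ℝ} {x y t : ℝ} (hF : DifferentiableAt ℝ F (x, y, t)) :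
    HasDerivAt (fun y' => F (x, y', t)) (fderiv ℝ F (x, y, t) (0, 1, 0)) y := by
  have hc : HasDerivAt (fun y' : ℝ => ((x, y', t) : E3)) ((0:ℝ), (1:ℝ), (0:ℝ)) y :=
    (hasDerivAt_const _ _).prodMk ((hasDerivAt_id y).prodMk (hasDerivAt_const _ _))
  exact hF.hasFDerivAt.comp_hasDerivAt y hc

lemma sliceT {F : E3 → ℝ} {x y t : ℝ} (hF : DifferentiableAt ℝ F (x, y, t)) :
    HasDerivAt (fun t' => F (x, y, t')) (fderiv ℝ F (x, y, t) (0, 0, 1)) t := by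
  have hc : HasDerivAt (fun t' : ℝ => ((x, y, t') : E3)) ((0:ℝ), (0:ℝ), (1:ℝ)) t :=
    (hasDerivAt_const _ _).prodMk ((hasDerivAt_const _ _).prodMk (hasDerivAt_id t))
  exact hF.hasFDerivAt.comp_hasDerivAt t hc

lemma hasFDerivAt_fderiv_apply {F : E3 → ℝ} (hF : ContDiff ℝ 2 F) (w a : E3) :
    HasFDerivAt (fun z => fderiv ℝ F z a) ((fderiv ℝ (fderiv ℝ F) w).flip a) w := by
  have h1 : ContDiff ℝ 1 (fderiv ℝ F) := hF.fderiv_right (by norm_num)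
  have h2 : HasFDerivAt (fderiv ℝ F) (fderiv ℝ (fderiv ℝ F) w) w :=
    ((h1.differentiable one_ne_zero) w).hasFDerivAt
  simpa using h2.clm_apply (hasFDerivAt_const a w)

lemma mixedX {F : E3 → ℝ} (hF : ContDiff ℝ 2 F) (x y t : ℝ) (a : E3) :
    HasDerivAt (fun x' => fderiv ℝ F (x', y, t) a)
      (fderiv ℝ (fderiv ℝ F) (x, y, t) (1, 0, 0) a) x := by
  have h := hasFDerivAt_fderiv_apply hF (x, y, t) a
  have hc : HasDerivAt (fun x' : ℝ => ((x', y, t) : E3)) ((1:ℝ), (0:ℝ), (0:ℝ)) x :=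
    (hasDerivAt_id x).prodMk (hasDerivAt_const _ _)
  simpa [Function.comp_def] using h.comp_hasDerivAt x hc

lemma mixedY {F : E3 → ℝ} (hF : ContDiff ℝ 2 F) (x y t : ℝ) (a : E3) :
    HasDerivAt (fun y' => fderiv ℝ F (x, y', t) a)
      (fderiv ℝ (fderiv ℝ F) (x, y, t) (0, 1, 0) a) y := by
  have h := hasFDerivAt_fderiv_apply hF (x, y, t) a
  have hc : HasDerivAt (fun y' : ℝ => ((x, y', t) : E3)) ((0:ℝ), (1:ℝ), (0:ℝ)) y :=
    (hasDerivAt_const _ _).prodMk ((hasDerivAt_id y).prodMk (hasDerivAt_const _ _))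
  simpa [Function.comp_def] using h.comp_hasDerivAt y hc

lemma mixedT {F : E3 → ℝ} (hF : ContDiff ℝ 2 F) (x y t : ℝ) (a : E3) :
    HasDerivAt (fun t' => fderiv ℝ F (x, y, t') a)
      (fderiv ℝ (fderiv ℝ F) (x, y, t) (0, 0, 1) a) t := by
  have h := hasFDerivAt_fderiv_apply hF (x, y, t) a
  have hc : HasDerivAt (fun t' : ℝ => ((x, y, t') : E3)) ((0:ℝ), (0:ℝ), (1:ℝ)) t :=
    (hasDerivAt_const _ _).prodMk ((hasDerivAt_const _ _).prodMk (hasDerivAt_id t))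
  simpa [Function.comp_def] using h.comp_hasDerivAt t hc

lemma key
    (N : ℕ) (c : Fin N → ℝ)
    (S St : Fin N → ℝ → ℝ → ℝ → ℝ) (v : ℝ → ℝ → ℝ → ℝ)
    (hS : ∀ k, ContDiff ℝ 2 (fun w : ℝ × ℝ × ℝ => S k w.1 w.2.1 w.2.2))
    (hSt : ∀ k, ContDiff ℝ 2 (fun w : ℝ × ℝ × ℝ => St k w.1 w.2.1 w.2.2))
    (hv : ContDiff ℝ 2 (fun w : ℝ × ℝ × ℝ => v w.1 w.2.1 w.2.2))
    (p pt : Fin N → ℝ → ℝ → ℝ → ℝ) (u B : ℝ → ℝ → ℝ → ℝ)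
    (hp : ∀ k x y t, p k x y t = deriv (fun x' => S k x' y t) x)
    (hpt : ∀ k x y t, pt k x y t = deriv (fun x' => St k x' y t) x)
    (hu : ∀ x y t, u x y t
      = ∑ i, c i * (deriv (fun x' => S i x' y t) x - deriv (fun x' => St i x' y t) x))
    (hB : ∀ x y t, B x y t = ∑ i, c i * ((p i x y t) ^ 2 - (pt i x y t) ^ 2))
    (ha : ∀ k x y t, deriv (fun y' => S k x y' t) y = (p k x y t) ^ 2 + 2 * u x y t)
    (hat : ∀ k x y t, deriv (fun y' => St k x y' t) y = (pt k x y t) ^ 2 + 2 * u x y t)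
    (hb : ∀ k x y t, deriv (fun t' => S k x y t') t
      = (p k x y t) ^ 3 + 3 * u x y t * p k x y t + v x y t)
    (hcv : ∀ x y t, deriv (fun x' => v x' y t) x = (3 / 2) * deriv (fun y' => u x y' t) y) :
    ∀ k x y t,
      deriv (fun t' => p k x y t') t
        = deriv (fun x' => (p k x' y t) ^ 3 + 3 * p k x' y t * u x' y t
            + (3 / 2) * B x' y t) x := by
  intro k x y t
  set F : Fin N → E3 → ℝ := fun i w => S i w.1 w.2.1 w.2.2 with hFdef
  set G : Fin N → E3 → ℝ := fun i w => St i w.1 w.2.1 w.2.2 with hGdef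
  set V : E3 → ℝ := fun w => v w.1 w.2.1 w.2.2 with hVdef
  have hdF : ∀ i, Differentiable ℝ (F i) := fun i => (hS i).differentiable (by norm_num)
  have hdG : ∀ i, Differentiable ℝ (G i) := fun i => (hSt i).differentiable (by norm_num)
  have hdV : Differentiable ℝ V := hv.differentiable (by norm_num)
  -- p, pt, u as fderiv expressions
  have hp' : ∀ i x' y' t', p i x' y' t' = fderiv ℝ (F i) (x', y', t') (1, 0, 0) :=
    fun i x' y' t' => (hp i x' y' t').trans (sliceX (hdF i (x', y', t'))).deriv
  have hpt' : ∀ i x' y' t', pt i x' y' t' = fderiv ℝ (G i) (x', y', t') (1, 0, 0) :=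
    fun i x' y' t' => (hpt i x' y' t').trans (sliceX (hdG i (x', y', t'))).deriv
  have hu' : ∀ x' y' t', u x' y' t'
      = ∑ i, c i * (fderiv ℝ (F i) (x', y', t') (1, 0, 0)
          - fderiv ℝ (G i) (x', y', t') (1, 0, 0)) := by
    intro x' y' t'
    rw [hu]
    exact Finset.sum_congr rfl fun i _ => by
      rw [(sliceX (hdF i (x', y', t'))).deriv, (sliceX (hdG i (x', y', t'))).deriv]
  -- second derivative abbreviations
  set P : Fin N → ℝ := fun i => fderiv ℝ (fderiv ℝ (F i)) (x, y, t) (1, 0, 0) (1, 0, 0) with hPdef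
  set Q : Fin N → ℝ := fun i => fderiv ℝ (fderiv ℝ (G i)) (x, y, t) (1, 0, 0) (1, 0, 0) with hQdef
  set U' : ℝ := ∑ i, c i * (P i - Q i) with hU'def
  set B' : ℝ := ∑ i, c i * (2 * p i x y t * P i - 2 * pt i x y t * Q i) with hB'def
  -- symmetry of second derivatives
  have hsymF : ∀ i (a b : E3), fderiv ℝ (fderiv ℝ (F i)) (x, y, t) a b
      = fderiv ℝ (fderiv ℝ (F i)) (x, y, t) b a :=
    fun i a b => ((hS i).contDiffAt.isSymmSndFDerivAt (by simp)).eq a b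
  have hsymG : ∀ i (a b : E3), fderiv ℝ (fderiv ℝ (G i)) (x, y, t) a b
      = fderiv ℝ (fderiv ℝ (G i)) (x, y, t) b a :=
    fun i a b => ((hSt i).contDiffAt.isSymmSndFDerivAt (by simp)).eq a b
  -- x-derivatives of the basic fields at (x,y,t)
  have hpx : ∀ i, HasDerivAt (fun x' => p i x' y t) (P i) x := by
    intro i
    have he : (fun x' => p i x' y t) = fun x' => fderiv ℝ (F i) (x', y, t) (1, 0, 0) :=
      funext fun x' => hp' i x' y t
    rw [he]; exact mixedX (hS i) x y t (1, 0, 0)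
  have hqx : ∀ i, HasDerivAt (fun x' => pt i x' y t) (Q i) x := by
    intro i
    have he : (fun x' => pt i x' y t) = fun x' => fderiv ℝ (G i) (x', y, t) (1, 0, 0) :=
      funext fun x' => hpt' i x' y t
    rw [he]; exact mixedX (hSt i) x y t (1, 0, 0)
  have hux : HasDerivAt (fun x' => u x' y t) U' x := by
    have he : (fun x' => u x' y t) = fun x' => ∑ i, c i *
        (fderiv ℝ (F i) (x', y, t) (1, 0, 0) - fderiv ℝ (G i) (x', y, t) (1, 0, 0)) :=
      funext fun x' => hu' x' y t
    rw [he, hU'def]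
    exact HasDerivAt.fun_sum fun i _ =>
      ((mixedX (hS i) x y t (1, 0, 0)).sub (mixedX (hSt i) x y t (1, 0, 0))).const_mul (c i)
  have hBx : HasDerivAt (fun x' => B x' y t) B' x := by
    have he : (fun x' => B x' y t)
        = fun x' => ∑ i, c i * ((p i x' y t) ^ 2 - (pt i x' y t) ^ 2) :=
      funext fun x' => hB x' y t
    rw [he, hB'def]
    refine HasDerivAt.fun_sum fun i _ => ?_
    have h := (((hpx i).fun_pow 2).fun_sub ((hqx i).fun_pow 2)).const_mul (c i)
    convert h using 1
    rfl
    push_cast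
    ring
  have hvx : HasDerivAt (fun x' => v x' y t) (fderiv ℝ V (x, y, t) (1, 0, 0)) x :=
    sliceX (hdV (x, y, t))
  -- y-derivative of u
  have huy : HasDerivAt (fun y' => u x y' t)
      (∑ i, c i * (fderiv ℝ (fderiv ℝ (F i)) (x, y, t) (0, 1, 0) (1, 0, 0)
        - fderiv ℝ (fderiv ℝ (G i)) (x, y, t) (0, 1, 0) (1, 0, 0))) y := by
    have he : (fun y' => u x y' t) = fun y' => ∑ i, c i *
        (fderiv ℝ (F i) (x, y', t) (1, 0, 0) - fderiv ℝ (G i) (x, y', t) (1, 0, 0)) :=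
      funext fun y' => hu' x y' t
    rw [he]
    exact HasDerivAt.fun_sum fun i _ =>
      ((mixedY (hS i) x y t (1, 0, 0)).sub (mixedY (hSt i) x y t (1, 0, 0))).const_mul (c i)
  -- mixed e1 e2 identities from equation (a)
  have hiiF : ∀ i, fderiv ℝ (fderiv ℝ (F i)) (x, y, t) (1, 0, 0) (0, 1, 0)
      = 2 * p i x y t * P i + 2 * U' := by
    intro i
    have h1 := mixedX (hS i) x y t (0, 1, 0)
    have he : (fun x' => fderiv ℝ (F i) (x', y, t) (0, 1, 0))
        = fun x' => (p i x' y t) ^ 2 + 2 * u x' y t :=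
      funext fun x' => ((sliceY (hdF i (x', y, t))).deriv).symm.trans (ha i x' y t)
    rw [he] at h1
    have h2 : HasDerivAt (fun x' => (p i x' y t) ^ 2 + 2 * u x' y t)
        (2 * p i x y t * P i + 2 * U') x := by
      have h := ((hpx i).fun_pow 2).fun_add (hux.const_mul 2)
      convert h using 1
      rfl
      rfl
      push_cast
      ring
    exact h1.unique h2
  have hiiG : ∀ i, fderiv ℝ (fderiv ℝ (G i)) (x, y, t) (1, 0, 0) (0, 1, 0)
      = 2 * pt i x y t * Q i + 2 * U' := by
    intro i
    have h1 := mixedX (hSt i) x y t (0, 1, 0)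
    have he : (fun x' => fderiv ℝ (G i) (x', y, t) (0, 1, 0))
        = fun x' => (pt i x' y t) ^ 2 + 2 * u x' y t :=
      funext fun x' => ((sliceY (hdG i (x', y, t))).deriv).symm.trans (hat i x' y t)
    rw [he] at h1
    have h2 : HasDerivAt (fun x' => (pt i x' y t) ^ 2 + 2 * u x' y t)
        (2 * pt i x y t * Q i + 2 * U') x := by
      have h := ((hqx i).fun_pow 2).fun_add (hux.const_mul 2)
      convert h using 1
      rfl
      rfl
      push_cast
      ring
    exact h1.unique h2
  -- ∂_y u = ∂_x B
  have huyB : deriv (fun y' => u x y' t) y = B' := by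
    rw [huy.deriv, hB'def]
    refine Finset.sum_congr rfl fun i _ => ?_
    rw [hsymF i, hsymG i, hiiF i, hiiG i]
    ring
  -- ∂_x v = (3/2) B'
  have hVxB : fderiv ℝ V (x, y, t) (1, 0, 0) = (3 / 2) * B' := by
    rw [← hvx.deriv, hcv, huyB]
  -- LHS
  have hL1 : deriv (fun t' => p k x y t') t
      = fderiv ℝ (fderiv ℝ (F k)) (x, y, t) (0, 0, 1) (1, 0, 0) := by
    have he : (fun t' => p k x y t') = fun t' => fderiv ℝ (F k) (x, y, t') (1, 0, 0) :=
      funext fun t' => hp' k x y t'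
    rw [he]; exact (mixedT (hS k) x y t (1, 0, 0)).deriv
  -- middle: ∂_x (∂_t S k)
  have hmid : HasDerivAt (fun x' => (p k x' y t) ^ 3 + 3 * u x' y t * p k x' y t + v x' y t)
      (fderiv ℝ (fderiv ℝ (F k)) (x, y, t) (1, 0, 0) (0, 0, 1)) x := by
    have he : (fun x' => fderiv ℝ (F k) (x', y, t) (0, 0, 1))
        = fun x' => (p k x' y t) ^ 3 + 3 * u x' y t * p k x' y t + v x' y t :=
      funext fun x' => ((sliceT (hdF k (x', y, t))).deriv).symm.trans (hb k x' y t)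
    rw [← he]
    exact mixedX (hS k) x y t (0, 0, 1)
  have hmid2 : HasDerivAt (fun x' => (p k x' y t) ^ 3 + 3 * u x' y t * p k x' y t + v x' y t)
      (3 * (p k x y t) ^ 2 * P k + 3 * (U' * p k x y t + u x y t * P k)
        + fderiv ℝ V (x, y, t) (1, 0, 0)) x := by
    have h := (((hpx k).fun_pow 3).fun_add ((hux.const_mul 3).fun_mul (hpx k))).fun_add hvx
    convert h using 1
    rfl
    rfl
    push_cast
    ring
  have hveq : fderiv ℝ (fderiv ℝ (F k)) (x, y, t) (1, 0, 0) (0, 0, 1)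
      = 3 * (p k x y t) ^ 2 * P k + 3 * (U' * p k x y t + u x y t * P k)
        + fderiv ℝ V (x, y, t) (1, 0, 0) := hmid.unique hmid2
  -- RHS
  have hR : HasDerivAt (fun x' => (p k x' y t) ^ 3 + 3 * p k x' y t * u x' y t
      + (3 / 2) * B x' y t)
      (3 * (p k x y t) ^ 2 * P k + 3 * (P k * u x y t + p k x y t * U') + (3 / 2) * B') x := by
    have h := (((hpx k).fun_pow 3).fun_add (((hpx k).fun_mul hux).const_mul 3)).fun_add (hBx.const_mul (3 / 2))
    convert h using 1
    all_goals first
      | rfl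
      | (ext x'; ring)
      | (push_cast; ring)
  rw [hR.deriv, hL1, hsymF k, hveq, hVxB]
  ring



/-- Evaluation of the higher Hamilton–Jacobi equation `S_t = p³ + 3up + v`
(with `∂_x v = (3/2) ∂_y u`) of the dKP hierarchy under the symmetry constraint
`F_x = ∑ cᵢ (Sᵢ - S̃ᵢ)` yields the hydrodynamic-type system (hydro2a). -/
theorem stmt3
    (N : ℕ) (hN : 1 ≤ N) (c : Fin N → ℝ)
    (S St : Fin N → ℝ → ℝ → ℝ → ℝ) (v : ℝ → ℝ → ℝ → ℝ)
    (hS : ∀ k, ContDiff ℝ 2 (fun w : ℝ × ℝ × ℝ => S k w.1 w.2.1 w.2.2))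
    (hSt : ∀ k, ContDiff ℝ 2 (fun w : ℝ × ℝ × ℝ => St k w.1 w.2.1 w.2.2))
    (hv : ContDiff ℝ 2 (fun w : ℝ × ℝ × ℝ => v w.1 w.2.1 w.2.2))
    (p pt : Fin N → ℝ → ℝ → ℝ → ℝ) (u B : ℝ → ℝ → ℝ → ℝ)
    (hp : ∀ k x y t, p k x y t = deriv (fun x' => S k x' y t) x)
    (hpt : ∀ k x y t, pt k x y t = deriv (fun x' => St k x' y t) x)
    (hu : ∀ x y t, u x y t
      = ∑ i, c i * (deriv (fun x' => S i x' y t) x - deriv (fun x' => St i x' y t) x))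
    (hB : ∀ x y t, B x y t = ∑ i, c i * ((p i x y t) ^ 2 - (pt i x y t) ^ 2))
    -- (a) the first Hamilton–Jacobi equation at the points zᵢ, z̃ᵢ
    (ha : ∀ k x y t, deriv (fun y' => S k x y' t) y = (p k x y t) ^ 2 + 2 * u x y t)
    (hat : ∀ k x y t, deriv (fun y' => St k x y' t) y = (pt k x y t) ^ 2 + 2 * u x y t)
    -- (b) the higher Hamilton–Jacobi equation at the points zᵢ, z̃ᵢ
    (hb : ∀ k x y t, deriv (fun t' => S k x y t') t
      = (p k x y t) ^ 3 + 3 * u x y t * p k x y t + v x y t)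
    (hbt : ∀ k x y t, deriv (fun t' => St k x y t') t
      = (pt k x y t) ^ 3 + 3 * u x y t * pt k x y t + v x y t)
    -- (c) the potential relation `∂_x v = (3/2) ∂_y u`
    (hcv : ∀ x y t, deriv (fun x' => v x' y t) x = (3 / 2) * deriv (fun y' => u x y' t) y) :
    ∀ k x y t,
      deriv (fun t' => p k x y t') t
        = deriv (fun x' => (p k x' y t) ^ 3 + 3 * p k x' y t * u x' y t
            + (3 / 2) * B x' y t) x
      ∧ deriv (fun t' => pt k x y t') t
        = deriv (fun x' => (pt k x' y t) ^ 3 + 3 * pt k x' y t * u x' y t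
            + (3 / 2) * B x' y t) x := by
  intro k x y t
  have hu2 : ∀ x y t, u x y t = ∑ i, (-c i)
      * (deriv (fun x' => St i x' y t) x - deriv (fun x' => S i x' y t) x) :=
    fun x y t => (hu x y t).trans (Finset.sum_congr rfl fun i _ => by ring)
  have hB2 : ∀ x y t, B x y t = ∑ i, (-c i) * ((pt i x y t) ^ 2 - (p i x y t) ^ 2) :=
    fun x y t => (hB x y t).trans (Finset.sum_congr rfl fun i _ => by ring)
  exact ⟨key N c S St v hS hSt hv p pt u B hp hpt hu hB ha hat hb hcv k x y t,
    key N (fun i => -c i) St S v hSt hS hv pt p u B hpt hp hu2 hB2 hat ha hbt hcv k x y t⟩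
end

section
/- Let N ≥ 1 and let c₁,…,c_N be nonzero real constants. Define h₄ : ℝ^N × ℝ^N → ℝ by h₄(p, p̃) = (1/4)( Σ_{i=1}^N c_i (p_i⁴ − p̃_i⁴) + 6 ( Σ_{i=1}^N c_i (p_i − p̃_i) ) · ( Σ_{i=1}^N c_i (p_i² − p̃_i²) ) ). Then for every k = 1,…,N: (1/c_k) ∂h₄/∂p_k = p_k³ + 3 p_k Σ_i c_i (p_i − p̃_i) + (3/2) Σ_i c_i (p_i² − p̃_i²) and −(1/c_k) ∂h₄/∂p̃_k = p̃_k³ + 3 p̃_k Σ_i c_i (p_i − p̃_i) + (3/2) Σ_i c_i (p_i² − p̃_i²). -/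
open Finset

lemma sum_update_aux {N : ℕ} (k : Fin N) (g : Fin N → ℝ → ℝ) (p : Fin N → ℝ) (s : ℝ) :
    ∑ i, g i (Function.update p k s i)
      = g k s + ∑ i ∈ Finset.univ.erase k, g i (p i) := by
  rw [← Finset.add_sum_erase _ (fun i => g i (Function.update p k s i)) (Finset.mem_univ k)]
  rw [Function.update_self]
  congr 1
  refine Finset.sum_congr rfl fun i hi => ?_
  rw [Function.update_of_ne (Finset.ne_of_mem_erase hi)]

/-- Hamiltonian form of the constrained dKP t-flow system: the gradient of the
Hamiltonian density `h₄` reproduces the right-hand sides of (hydro2a). -/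
theorem stmt5
    (N : ℕ) (hN : 1 ≤ N) (c : Fin N → ℝ) (hc : ∀ i, c i ≠ 0)
    (h₄ : (Fin N → ℝ) → (Fin N → ℝ) → ℝ)
    (hdef : ∀ p pt, h₄ p pt = (1 / 4) * (∑ i, c i * ((p i) ^ 4 - (pt i) ^ 4)
      + 6 * (∑ i, c i * (p i - pt i)) * (∑ i, c i * ((p i) ^ 2 - (pt i) ^ 2)))) :
    ∀ (k : Fin N) (p pt : Fin N → ℝ),
      (1 / c k) * deriv (fun s => h₄ (Function.update p k s) pt) (p k)
        = (p k) ^ 3 + 3 * p k * (∑ i, c i * (p i - pt i))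
          + (3 / 2) * ∑ i, c i * ((p i) ^ 2 - (pt i) ^ 2)
      ∧ -(1 / c k) * deriv (fun s => h₄ p (Function.update pt k s)) (pt k)
        = (pt k) ^ 3 + 3 * pt k * (∑ i, c i * (p i - pt i))
          + (3 / 2) * ∑ i, c i * ((p i) ^ 2 - (pt i) ^ 2) := by
  intro k p pt
  set E := Finset.univ.erase k with hE
  -- abbreviations for the erase-sums
  set S1 := ∑ i ∈ E, c i * ((p i) ^ 4 - (pt i) ^ 4) with hS1
  set S2 := ∑ i ∈ E, c i * (p i - pt i) with hS2
  set S3 := ∑ i ∈ E, c i * ((p i) ^ 2 - (pt i) ^ 2) with hS3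
  have hsum1 : (∑ i, c i * ((p i) ^ 4 - (pt i) ^ 4))
      = c k * ((p k) ^ 4 - (pt k) ^ 4) + S1 := by
    rw [← Finset.add_sum_erase _ _ (Finset.mem_univ k)]
  have hsum2 : (∑ i, c i * (p i - pt i)) = c k * (p k - pt k) + S2 := by
    rw [← Finset.add_sum_erase _ _ (Finset.mem_univ k)]
  have hsum3 : (∑ i, c i * ((p i) ^ 2 - (pt i) ^ 2))
      = c k * ((p k) ^ 2 - (pt k) ^ 2) + S3 := by
    rw [← Finset.add_sum_erase _ _ (Finset.mem_univ k)]
  constructor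
  · -- p-derivative
    have hfun : (fun s => h₄ (Function.update p k s) pt)
        = fun s => (1 / 4) * ((c k * (s ^ 4 - (pt k) ^ 4) + S1)
            + 6 * (c k * (s - pt k) + S2) * (c k * (s ^ 2 - (pt k) ^ 2) + S3)) := by
      funext s
      rw [hdef]
      rw [sum_update_aux k (fun i x => c i * (x ^ 4 - (pt i) ^ 4)) p s,
          sum_update_aux k (fun i x => c i * (x - pt i)) p s,
          sum_update_aux k (fun i x => c i * (x ^ 2 - (pt i) ^ 2)) p s]
    have h1 : HasDerivAt (fun s : ℝ => c k * (s ^ 4 - (pt k) ^ 4) + S1)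
        (c k * (4 * (p k) ^ 3)) (p k) := by
      have := (((hasDerivAt_pow 4 (p k)).sub_const ((pt k) ^ 4)).const_mul (c k)).add_const S1
      simpa using this
    have h2 : HasDerivAt (fun s : ℝ => c k * (s - pt k) + S2) (c k) (p k) := by
      have := (((hasDerivAt_id (p k)).sub_const (pt k)).const_mul (c k)).add_const S2
      simpa using this
    have h3 : HasDerivAt (fun s : ℝ => c k * (s ^ 2 - (pt k) ^ 2) + S3)
        (c k * (2 * p k)) (p k) := by
      have := (((hasDerivAt_pow 2 (p k)).sub_const ((pt k) ^ 2)).const_mul (c k)).add_const S3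
      simpa using this
    have H := ((h1.add (((h2.const_mul 6).mul h3))).const_mul (1 / 4))
    simp only [Pi.add_apply, Pi.mul_apply] at H
    rw [show (fun s => h₄ (Function.update p k s) pt) = _ from hfun, H.deriv, hsum2, hsum3]
    field_simp [hc k]
    ring
  · -- pt-derivative
    have hfun : (fun s => h₄ p (Function.update pt k s))
        = fun s => (1 / 4) * ((c k * ((p k) ^ 4 - s ^ 4) + S1)
            + 6 * (c k * (p k - s) + S2) * (c k * ((p k) ^ 2 - s ^ 2) + S3)) := by
      funext s
      rw [hdef]
      rw [sum_update_aux k (fun i x => c i * ((p i) ^ 4 - x ^ 4)) pt s,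
          sum_update_aux k (fun i x => c i * ((p i) ^ 2 - x ^ 2)) pt s,
          sum_update_aux k (fun i x => c i * (p i - x)) pt s]
    have h1 : HasDerivAt (fun s : ℝ => c k * ((p k) ^ 4 - s ^ 4) + S1)
        (c k * (-(4 * (pt k) ^ 3))) (pt k) := by
      have := ((((hasDerivAt_pow 4 (pt k)).const_sub ((p k) ^ 4)).const_mul (c k))).add_const S1
      simpa using this
    have h2 : HasDerivAt (fun s : ℝ => c k * (p k - s) + S2) (c k * (-1)) (pt k) := by
      have := (((hasDerivAt_id (pt k)).const_sub (p k)).const_mul (c k)).add_const S2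
      simpa using this
    have h3 : HasDerivAt (fun s : ℝ => c k * ((p k) ^ 2 - s ^ 2) + S3)
        (c k * (-(2 * pt k))) (pt k) := by
      have := (((hasDerivAt_pow 2 (pt k)).const_sub ((p k) ^ 2)).const_mul (c k)).add_const S3
      simpa using this
    have H := ((h1.add (((h2.const_mul 6).mul h3))).const_mul (1 / 4))
    simp only [Pi.add_apply, Pi.mul_apply] at H
    rw [show (fun s => h₄ p (Function.update pt k s)) = _ from hfun, H.deriv, hsum2, hsum3]
    field_simp [hc k]
    ring
end

section
/- Let N ≥ 1, let c₁,…,c_N be real constants, and let p₁,…,p_N, p̃₁,…,p̃_N be smooth real-valued functions of (x,y,t) ∈ ℝ³ satisfying both the constrained dKP y-flow system ∂_y p_k = ∂_x(p_k² + 2u), ∂_y p̃_k = ∂_x(p̃_k² + 2u) and the constrained dKP t-flow system ∂_t p_k = ∂_x(p_k³ + 3 p_k u + (3/2)B), ∂_t p̃_k = ∂_x(p̃_k³ + 3 p̃_k u + (3/2)B) for all k, where u = Σ_{i=1}^N c_i (p_i − p̃_i) and B = Σ_{i=1}^N c_i (p_i² − p̃_i²). Then u solves the dispersionless KP equation: ∂_x(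 ∂_t u − 3 u ∂_x u ) = (3/4) ∂_y ∂_y u. -/
open Finset

/-- Directional (partial) derivative of a function on `ℝ × ℝ × ℝ`. -/
noncomputable def pd (v : ℝ × ℝ × ℝ) (F : ℝ × ℝ × ℝ → ℝ) : ℝ × ℝ × ℝ → ℝ :=
  fun z => fderiv ℝ F z v

lemma topLe : ((⊤ : ℕ∞) : WithTop ℕ∞) ≠ 0 := by simp

lemma pd_smooth {F : ℝ × ℝ × ℝ → ℝ} (hF : ContDiff ℝ (⊤ : ℕ∞) F) (v : ℝ × ℝ × ℝ) :
    ContDiff ℝ (⊤ : ℕ∞) (pd v F) :=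
  (hF.fderiv_right (by exact_mod_cast le_top)).clm_apply contDiff_const

lemma hasDerivAt_slice1 {F : ℝ × ℝ × ℝ → ℝ} (hF : Differentiable ℝ F) (x y t : ℝ) :
    HasDerivAt (fun s => F (s, y, t)) (pd (1, 0, 0) F (x, y, t)) x :=
  (hF (x, y, t)).hasFDerivAt.comp_hasDerivAt x
    ((hasDerivAt_id x).prodMk ((hasDerivAt_const x y).prodMk (hasDerivAt_const x t)))

lemma hasDerivAt_slice2 {F : ℝ × ℝ × ℝ → ℝ} (hF : Differentiable ℝ F) (x y t : ℝ) :
    HasDerivAt (fun s => F (x, s, t)) (pd (0, 1, 0) F (x, y, t)) y :=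
  (hF (x, y, t)).hasFDerivAt.comp_hasDerivAt y
    ((hasDerivAt_const y x).prodMk ((hasDerivAt_id y).prodMk (hasDerivAt_const y t)))

lemma hasDerivAt_slice3 {F : ℝ × ℝ × ℝ → ℝ} (hF : Differentiable ℝ F) (x y t : ℝ) :
    HasDerivAt (fun s => F (x, y, s)) (pd (0, 0, 1) F (x, y, t)) t :=
  (hF (x, y, t)).hasFDerivAt.comp_hasDerivAt t
    ((hasDerivAt_const t x).prodMk ((hasDerivAt_const t y).prodMk (hasDerivAt_id t)))

lemma deriv_slice1 {F : ℝ × ℝ × ℝ → ℝ} (hF : Differentiable ℝ F) (x y t : ℝ) :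
    deriv (fun s => F (s, y, t)) x = pd (1, 0, 0) F (x, y, t) :=
  (hasDerivAt_slice1 hF x y t).deriv

lemma deriv_slice2 {F : ℝ × ℝ × ℝ → ℝ} (hF : Differentiable ℝ F) (x y t : ℝ) :
    deriv (fun s => F (x, s, t)) y = pd (0, 1, 0) F (x, y, t) :=
  (hasDerivAt_slice2 hF x y t).deriv

lemma deriv_slice3 {F : ℝ × ℝ × ℝ → ℝ} (hF : Differentiable ℝ F) (x y t : ℝ) :
    deriv (fun s => F (x, y, s)) t = pd (0, 0, 1) F (x, y, t) :=
  (hasDerivAt_slice3 hF x y t).deriv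

lemma pd_add (v z : ℝ × ℝ × ℝ) {f g : ℝ × ℝ × ℝ → ℝ}
    (hf : DifferentiableAt ℝ f z) (hg : DifferentiableAt ℝ g z) :
    pd v (fun w => f w + g w) z = pd v f z + pd v g z := by
  have h : HasFDerivAt (fun w => f w + g w) (fderiv ℝ f z + fderiv ℝ g z) z :=
    hf.hasFDerivAt.add hg.hasFDerivAt
  simp only [pd]; rw [h.fderiv, ContinuousLinearMap.add_apply]

lemma pd_const_mul (v z : ℝ × ℝ × ℝ) (a : ℝ) {f : ℝ × ℝ × ℝ → ℝ}
    (hf : DifferentiableAt ℝ f z) :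
    pd v (fun w => a * f w) z = a * pd v f z := by
  simp [pd, (hf.hasFDerivAt.const_mul a).fderiv]

lemma pd_mul (v z : ℝ × ℝ × ℝ) {f g : ℝ × ℝ × ℝ → ℝ}
    (hf : DifferentiableAt ℝ f z) (hg : DifferentiableAt ℝ g z) :
    pd v (fun w => f w * g w) z = f z * pd v g z + g z * pd v f z := by
  have h : HasFDerivAt (fun w => f w * g w) (f z • fderiv ℝ g z + g z • fderiv ℝ f z) z :=
    hf.hasFDerivAt.mul hg.hasFDerivAt
  simp only [pd]; rw [h.fderiv]; simp

lemma pd_sq (v z : ℝ × ℝ × ℝ) {f : ℝ × ℝ × ℝ → ℝ} (hf : DifferentiableAt ℝ f z) :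
    pd v (fun w => f w ^ 2) z = 2 * f z * pd v f z := by
  have h : (fun w => f w ^ 2) = fun w => f w * f w := funext fun w => sq (f w)
  rw [h, pd_mul v z hf hf]; ring

lemma pd_cube (v z : ℝ × ℝ × ℝ) {f : ℝ × ℝ × ℝ → ℝ} (hf : DifferentiableAt ℝ f z) :
    pd v (fun w => f w ^ 3) z = 3 * f z ^ 2 * pd v f z := by
  have h : (fun w => f w ^ 3) = fun w => f w ^ 2 * f w := funext fun w => by ring
  rw [h, pd_mul (f := fun w => f w ^ 2) (g := f) v z (hf.pow 2) hf, pd_sq v z hf]; ring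

lemma pd_csum {N : ℕ} (c : Fin N → ℝ) (f g : Fin N → ℝ × ℝ × ℝ → ℝ) (v z : ℝ × ℝ × ℝ)
    (hf : ∀ i, DifferentiableAt ℝ (f i) z) (hg : ∀ i, DifferentiableAt ℝ (g i) z) :
    pd v (fun w => ∑ i, c i * (f i w - g i w)) z
      = ∑ i, c i * (pd v (f i) z - pd v (g i) z) := by
  have h : HasFDerivAt (fun w => ∑ i, c i * (f i w - g i w))
      (∑ i, c i • (fderiv ℝ (f i) z - fderiv ℝ (g i) z)) z :=
    HasFDerivAt.fun_sum fun i _ => ((hf i).hasFDerivAt.sub (hg i).hasFDerivAt).const_mul (c i)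
  simp [pd, h.fderiv]

lemma pd_comm {F : ℝ × ℝ × ℝ → ℝ} (hF : ContDiff ℝ (⊤ : ℕ∞) F) (v w z : ℝ × ℝ × ℝ) :
    pd v (pd w F) z = pd w (pd v F) z := by
  have hd : DifferentiableAt ℝ (fderiv ℝ F) z :=
    ((hF.fderiv_right (m := ((⊤ : ℕ∞) : WithTop ℕ∞)) (by exact_mod_cast le_top)).differentiable
      topLe) z
  have key : ∀ a b : ℝ × ℝ × ℝ, pd a (pd b F) z = fderiv ℝ (fderiv ℝ F) z a b := by
    intro a b
    have h : HasFDerivAt (pd b F)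
        ((ContinuousLinearMap.apply ℝ ℝ b).comp (fderiv ℝ (fderiv ℝ F) z)) z :=
      (ContinuousLinearMap.apply ℝ ℝ b).hasFDerivAt.comp z hd.hasFDerivAt
    show fderiv ℝ (pd b F) z a = _
    rw [h.fderiv]
    simp
  rw [key, key]
  exact second_derivative_symmetric
    (fun q => ((hF.differentiable topLe) q).hasFDerivAt)
    hd.hasFDerivAt v w
theorem dkp_core {N : ℕ} (c : Fin N → ℝ) (P Pt : Fin N → ℝ × ℝ × ℝ → ℝ)
    (U Bf : ℝ × ℝ × ℝ → ℝ)
    (hP : ∀ k, ContDiff ℝ (⊤ : ℕ∞) (P k)) (hPt : ∀ k, ContDiff ℝ (⊤ : ℕ∞) (Pt k))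
    (hU : ∀ z, U z = ∑ i, c i * (P i z - Pt i z))
    (hB : ∀ z, Bf z = ∑ i, c i * (P i z ^ 2 - Pt i z ^ 2))
    (hy : ∀ k z, pd (0, 1, 0) (P k) z
      = pd (1, 0, 0) (fun w => P k w ^ 2 + 2 * U w) z)
    (hyt : ∀ k z, pd (0, 1, 0) (Pt k) z
      = pd (1, 0, 0) (fun w => Pt k w ^ 2 + 2 * U w) z)
    (ht : ∀ k z, pd (0, 0, 1) (P k) z
      = pd (1, 0, 0) (fun w => P k w ^ 3 + 3 * P k w * U w + 3 / 2 * Bf w) z)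
    (htt : ∀ k z, pd (0, 0, 1) (Pt k) z
      = pd (1, 0, 0) (fun w => Pt k w ^ 3 + 3 * Pt k w * U w + 3 / 2 * Bf w) z)
    (z : ℝ × ℝ × ℝ) :
    pd (1, 0, 0) (fun w => pd (0, 0, 1) U w - 3 * U w * pd (1, 0, 0) U w) z
      = 3 / 4 * pd (0, 1, 0) (pd (0, 1, 0) U) z := by
  have hUf : U = fun w => ∑ i, c i * (P i w - Pt i w) := funext hU
  have hBff : Bf = fun w => ∑ i, c i * (P i w ^ 2 - Pt i w ^ 2) := funext hB
  have hUs : ContDiff ℝ (⊤ : ℕ∞) U := by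
    rw [hUf]; exact ContDiff.sum fun i _ => contDiff_const.mul ((hP i).sub (hPt i))
  have hBs : ContDiff ℝ (⊤ : ℕ∞) Bf := by
    rw [hBff]
    exact ContDiff.sum fun i _ => contDiff_const.mul (((hP i).pow 2).sub ((hPt i).pow 2))
  set Cf : ℝ × ℝ × ℝ → ℝ := fun w => ∑ i, c i * (P i w ^ 3 - Pt i w ^ 3) with hCdef
  have hCs : ContDiff ℝ (⊤ : ℕ∞) Cf :=
    ContDiff.sum fun i _ => contDiff_const.mul (((hP i).pow 3).sub ((hPt i).pow 3))
  have dP : ∀ k (w : ℝ × ℝ × ℝ), DifferentiableAt ℝ (P k) w :=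
    fun k w => ((hP k).differentiable topLe) w
  have dPt : ∀ k (w : ℝ × ℝ × ℝ), DifferentiableAt ℝ (Pt k) w :=
    fun k w => ((hPt k).differentiable topLe) w
  have dU : ∀ w : ℝ × ℝ × ℝ, DifferentiableAt ℝ U w :=
    fun w => (hUs.differentiable topLe) w
  -- derivatives of the sums
  have hUx : ∀ (v w : ℝ × ℝ × ℝ), pd v U w = ∑ i, c i * (pd v (P i) w - pd v (Pt i) w) := by
    intro v w
    rw [hUf]
    exact pd_csum c P Pt v w (fun i => dP i w) (fun i => dPt i w)
  have hBx : ∀ (v w : ℝ × ℝ × ℝ), pd v Bf w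
      = ∑ i, c i * (2 * P i w * pd v (P i) w - 2 * Pt i w * pd v (Pt i) w) := by
    intro v w
    rw [hBff]
    calc pd v (fun w => ∑ i, c i * (P i w ^ 2 - Pt i w ^ 2)) w
        = ∑ i, c i * (pd v (fun w => P i w ^ 2) w - pd v (fun w => Pt i w ^ 2) w) :=
          pd_csum c (fun i w => P i w ^ 2) (fun i w => Pt i w ^ 2) v w
            (fun i => (dP i w).pow 2) (fun i => (dPt i w).pow 2)
      _ = ∑ i, c i * (2 * P i w * pd v (P i) w - 2 * Pt i w * pd v (Pt i) w) :=
          Finset.sum_congr rfl fun i _ => by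
            rw [pd_sq v w (dP i w), pd_sq v w (dPt i w)]
  have hCx : ∀ w : ℝ × ℝ × ℝ, pd (1, 0, 0) Cf w
      = ∑ i, c i * (3 * P i w ^ 2 * pd (1, 0, 0) (P i) w
          - 3 * Pt i w ^ 2 * pd (1, 0, 0) (Pt i) w) := by
    intro w
    calc pd (1, 0, 0) Cf w
        = ∑ i, c i * (pd (1, 0, 0) (fun w => P i w ^ 3) w
            - pd (1, 0, 0) (fun w => Pt i w ^ 3) w) :=
          pd_csum c (fun i w => P i w ^ 3) (fun i w => Pt i w ^ 3) (1, 0, 0) w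
            (fun i => (dP i w).pow 3) (fun i => (dPt i w).pow 3)
      _ = _ := Finset.sum_congr rfl fun i _ => by
            rw [pd_cube (1, 0, 0) w (dP i w), pd_cube (1, 0, 0) w (dPt i w)]
  -- expanded flow equations
  have hy2 : ∀ k (w : ℝ × ℝ × ℝ), pd (0, 1, 0) (P k) w
      = 2 * P k w * pd (1, 0, 0) (P k) w + 2 * pd (1, 0, 0) U w := by
    intro k w
    calc pd (0, 1, 0) (P k) w
        = pd (1, 0, 0) (fun w => P k w ^ 2 + 2 * U w) w := hy k w
      _ = pd (1, 0, 0) (fun w => P k w ^ 2) w + pd (1, 0, 0) (fun w => 2 * U w) w :=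
          pd_add (1, 0, 0) w ((dP k w).pow 2) ((dU w).const_mul 2)
      _ = 2 * P k w * pd (1, 0, 0) (P k) w + 2 * pd (1, 0, 0) U w := by
          rw [pd_sq (1, 0, 0) w (dP k w), pd_const_mul (1, 0, 0) w 2 (dU w)]
  have hyt2 : ∀ k (w : ℝ × ℝ × ℝ), pd (0, 1, 0) (Pt k) w
      = 2 * Pt k w * pd (1, 0, 0) (Pt k) w + 2 * pd (1, 0, 0) U w := by
    intro k w
    calc pd (0, 1, 0) (Pt k) w
        = pd (1, 0, 0) (fun w => Pt k w ^ 2 + 2 * U w) w := hyt k w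
      _ = pd (1, 0, 0) (fun w => Pt k w ^ 2) w + pd (1, 0, 0) (fun w => 2 * U w) w :=
          pd_add (1, 0, 0) w ((dPt k w).pow 2) ((dU w).const_mul 2)
      _ = 2 * Pt k w * pd (1, 0, 0) (Pt k) w + 2 * pd (1, 0, 0) U w := by
          rw [pd_sq (1, 0, 0) w (dPt k w), pd_const_mul (1, 0, 0) w 2 (dU w)]
  have dB : ∀ w : ℝ × ℝ × ℝ, DifferentiableAt ℝ Bf w :=
    fun w => (hBs.differentiable topLe) w
  have ht2 : ∀ k (w : ℝ × ℝ × ℝ), pd (0, 0, 1) (P k) w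
      = 3 * P k w ^ 2 * pd (1, 0, 0) (P k) w
        + (3 * P k w * pd (1, 0, 0) U w + U w * (3 * pd (1, 0, 0) (P k) w))
        + 3 / 2 * pd (1, 0, 0) Bf w := by
    intro k w
    calc pd (0, 0, 1) (P k) w
        = pd (1, 0, 0) (fun w => P k w ^ 3 + 3 * P k w * U w + 3 / 2 * Bf w) w := ht k w
      _ = pd (1, 0, 0) (fun w => P k w ^ 3 + 3 * P k w * U w) w
          + pd (1, 0, 0) (fun w => 3 / 2 * Bf w) w :=
          pd_add (1, 0, 0) w
            (((dP k w).pow 3).add (((dP k w).const_mul 3).mul (dU w))) ((dB w).const_mul _)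
      _ = pd (1, 0, 0) (fun w => P k w ^ 3) w + pd (1, 0, 0) (fun w => 3 * P k w * U w) w
          + pd (1, 0, 0) (fun w => 3 / 2 * Bf w) w := by
          rw [pd_add (f := fun w => P k w ^ 3) (g := fun w => 3 * P k w * U w) (1, 0, 0) w ((dP k w).pow 3) (((dP k w).const_mul 3).mul (dU w))]
      _ = _ := by
          rw [pd_cube (1, 0, 0) w (dP k w), pd_const_mul (1, 0, 0) w (3 / 2) (dB w),
            pd_mul (1, 0, 0) w ((dP k w).const_mul 3) (dU w),
            pd_const_mul (1, 0, 0) w 3 (dP k w)]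
  have htt2 : ∀ k (w : ℝ × ℝ × ℝ), pd (0, 0, 1) (Pt k) w
      = 3 * Pt k w ^ 2 * pd (1, 0, 0) (Pt k) w
        + (3 * Pt k w * pd (1, 0, 0) U w + U w * (3 * pd (1, 0, 0) (Pt k) w))
        + 3 / 2 * pd (1, 0, 0) Bf w := by
    intro k w
    calc pd (0, 0, 1) (Pt k) w
        = pd (1, 0, 0) (fun w => Pt k w ^ 3 + 3 * Pt k w * U w + 3 / 2 * Bf w) w := htt k w
      _ = pd (1, 0, 0) (fun w => Pt k w ^ 3 + 3 * Pt k w * U w) w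
          + pd (1, 0, 0) (fun w => 3 / 2 * Bf w) w :=
          pd_add (1, 0, 0) w
            (((dPt k w).pow 3).add (((dPt k w).const_mul 3).mul (dU w))) ((dB w).const_mul _)
      _ = pd (1, 0, 0) (fun w => Pt k w ^ 3) w + pd (1, 0, 0) (fun w => 3 * Pt k w * U w) w
          + pd (1, 0, 0) (fun w => 3 / 2 * Bf w) w := by
          rw [pd_add (f := fun w => Pt k w ^ 3) (g := fun w => 3 * Pt k w * U w) (1, 0, 0) w ((dPt k w).pow 3) (((dPt k w).const_mul 3).mul (dU w))]
      _ = _ := by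
          rw [pd_cube (1, 0, 0) w (dPt k w), pd_const_mul (1, 0, 0) w (3 / 2) (dB w),
            pd_mul (1, 0, 0) w ((dPt k w).const_mul 3) (dU w),
            pd_const_mul (1, 0, 0) w 3 (dPt k w)]
  -- key identities
  have key1 : ∀ w : ℝ × ℝ × ℝ, pd (0, 1, 0) U w = pd (1, 0, 0) Bf w := by
    intro w
    rw [hUx (0, 1, 0) w, hBx (1, 0, 0) w]
    refine Finset.sum_congr rfl fun i _ => ?_
    rw [hy2 i w, hyt2 i w]; ring
  have key2 : ∀ w : ℝ × ℝ × ℝ, pd (0, 1, 0) Bf w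
      = 4 / 3 * pd (1, 0, 0) Cf w + 4 * U w * pd (1, 0, 0) U w := by
    intro w
    calc pd (0, 1, 0) Bf w
        = ∑ i, c i * (2 * P i w * (2 * P i w * pd (1, 0, 0) (P i) w + 2 * pd (1, 0, 0) U w)
            - 2 * Pt i w * (2 * Pt i w * pd (1, 0, 0) (Pt i) w + 2 * pd (1, 0, 0) U w)) := by
          rw [hBx (0, 1, 0) w]
          exact Finset.sum_congr rfl fun i _ => by rw [hy2 i w, hyt2 i w]
      _ = ∑ i, (4 / 3 * (c i * (3 * P i w ^ 2 * pd (1, 0, 0) (P i) w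
            - 3 * Pt i w ^ 2 * pd (1, 0, 0) (Pt i) w))
            + 4 * pd (1, 0, 0) U w * (c i * (P i w - Pt i w))) :=
          Finset.sum_congr rfl fun i _ => by ring
      _ = 4 / 3 * pd (1, 0, 0) Cf w + 4 * U w * pd (1, 0, 0) U w := by
          rw [Finset.sum_add_distrib, ← Finset.mul_sum, ← Finset.mul_sum,
            ← hCx w, ← hU w]
          ring
  have key3 : ∀ w : ℝ × ℝ × ℝ, pd (0, 0, 1) U w
      = pd (1, 0, 0) Cf w + 6 * U w * pd (1, 0, 0) U w := by
    intro w
    calc pd (0, 0, 1) U w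
        = ∑ i, c i * (pd (0, 0, 1) (P i) w - pd (0, 0, 1) (Pt i) w) := hUx (0, 0, 1) w
      _ = ∑ i, (c i * (3 * P i w ^ 2 * pd (1, 0, 0) (P i) w
            - 3 * Pt i w ^ 2 * pd (1, 0, 0) (Pt i) w)
            + (3 * U w * (c i * (pd (1, 0, 0) (P i) w - pd (1, 0, 0) (Pt i) w))
            + 3 * pd (1, 0, 0) U w * (c i * (P i w - Pt i w)))) :=
          Finset.sum_congr rfl fun i _ => by rw [ht2 i w, htt2 i w]; ring
      _ = pd (1, 0, 0) Cf w + 6 * U w * pd (1, 0, 0) U w := by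
          rw [Finset.sum_add_distrib, Finset.sum_add_distrib, ← Finset.mul_sum,
            ← Finset.mul_sum, ← hCx w, ← hUx (1, 0, 0) w, ← hU w]
          ring
  -- final assembly
  have dCx : DifferentiableAt ℝ (pd (1, 0, 0) Cf) z :=
    ((pd_smooth hCs (1, 0, 0)).differentiable topLe) z
  have dQ : DifferentiableAt ℝ (fun w => U w * pd (1, 0, 0) U w) z :=
    (dU z).mul (((pd_smooth hUs (1, 0, 0)).differentiable topLe) z)
  have hfun1 : (fun w => pd (0, 0, 1) U w - 3 * U w * pd (1, 0, 0) U w)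
      = fun w => pd (1, 0, 0) Cf w + 3 * (U w * pd (1, 0, 0) U w) := by
    funext w; rw [key3 w]; ring
  have hfun2 : pd (0, 1, 0) U = pd (1, 0, 0) Bf := funext key1
  have hfun3 : pd (0, 1, 0) Bf
      = fun w => 4 / 3 * pd (1, 0, 0) Cf w + 4 * (U w * pd (1, 0, 0) U w) := by
    funext w; rw [key2 w]; ring
  rw [hfun1, hfun2, pd_comm hBs (0, 1, 0) (1, 0, 0) z, hfun3]
  have eA : pd (1, 0, 0) (fun w => pd (1, 0, 0) Cf w + 3 * (U w * pd (1, 0, 0) U w)) z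
      = pd (1, 0, 0) (pd (1, 0, 0) Cf) z
        + 3 * pd (1, 0, 0) (fun w => U w * pd (1, 0, 0) U w) z :=
    calc pd (1, 0, 0) (fun w => pd (1, 0, 0) Cf w + 3 * (U w * pd (1, 0, 0) U w)) z
        = pd (1, 0, 0) (pd (1, 0, 0) Cf) z
          + pd (1, 0, 0) (fun w => 3 * (U w * pd (1, 0, 0) U w)) z :=
          pd_add (1, 0, 0) z dCx (dQ.const_mul 3)
      _ = _ := congrArg _ (pd_const_mul (1, 0, 0) z 3 dQ)
  have eB : pd (1, 0, 0) (fun w => 4 / 3 * pd (1, 0, 0) Cf w + 4 * (U w * pd (1, 0, 0) U w)) z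
      = 4 / 3 * pd (1, 0, 0) (pd (1, 0, 0) Cf) z
        + 4 * pd (1, 0, 0) (fun w => U w * pd (1, 0, 0) U w) z :=
    calc pd (1, 0, 0) (fun w => 4 / 3 * pd (1, 0, 0) Cf w + 4 * (U w * pd (1, 0, 0) U w)) z
        = pd (1, 0, 0) (fun w => 4 / 3 * pd (1, 0, 0) Cf w) z
          + pd (1, 0, 0) (fun w => 4 * (U w * pd (1, 0, 0) U w)) z :=
          pd_add (1, 0, 0) z (dCx.const_mul _) (dQ.const_mul _)
      _ = _ := congrArg₂ (· + ·) (pd_const_mul (1, 0, 0) z (4 / 3) dCx)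
            (pd_const_mul (1, 0, 0) z 4 dQ)
  rw [eA, eB]
  ring
/-- A common solution of the constrained dKP y-flow system (hydro2) and t-flow
system (hydro2a) generates a solution `u = ∑ cᵢ (pᵢ - p̃ᵢ)` of the dispersionless
KP equation `∂_x(∂_t u - 3 u ∂_x u) = (3/4) ∂_y ∂_y u`. -/
theorem stmt7
    (N : ℕ) (hN : 1 ≤ N) (c : Fin N → ℝ)
    (p pt : Fin N → ℝ → ℝ → ℝ → ℝ)
    (hp : ∀ k, ContDiff ℝ (⊤ : ℕ∞) (fun w : ℝ × ℝ × ℝ => p k w.1 w.2.1 w.2.2))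
    (hpt : ∀ k, ContDiff ℝ (⊤ : ℕ∞) (fun w : ℝ × ℝ × ℝ => pt k w.1 w.2.1 w.2.2))
    (u B : ℝ → ℝ → ℝ → ℝ)
    (hu : ∀ x y t, u x y t = ∑ i, c i * (p i x y t - pt i x y t))
    (hB : ∀ x y t, B x y t = ∑ i, c i * ((p i x y t) ^ 2 - (pt i x y t) ^ 2))
    -- the constrained dKP y-flow system (hydro2)
    (hsy : ∀ k x y t, deriv (fun y' => p k x y' t) y
      = deriv (fun x' => (p k x' y t) ^ 2 + 2 * u x' y t) x)
    (hsyt : ∀ k x y t, deriv (fun y' => pt k x y' t) y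
      = deriv (fun x' => (pt k x' y t) ^ 2 + 2 * u x' y t) x)
    -- the constrained dKP t-flow system (hydro2a)
    (hst : ∀ k x y t, deriv (fun t' => p k x y t') t
      = deriv (fun x' => (p k x' y t) ^ 3 + 3 * p k x' y t * u x' y t
          + (3 / 2) * B x' y t) x)
    (hstt : ∀ k x y t, deriv (fun t' => pt k x y t') t
      = deriv (fun x' => (pt k x' y t) ^ 3 + 3 * pt k x' y t * u x' y t
          + (3 / 2) * B x' y t) x) :
    ∀ x y t,
      deriv (fun x' => deriv (fun t' => u x' y t') t
          - 3 * u x' y t * deriv (fun x'' => u x'' y t) x') x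
        = (3 / 4) * deriv (fun y' => deriv (fun y'' => u x y'' t) y') y := by
  intro x y t
  set P : Fin N → ℝ × ℝ × ℝ → ℝ := fun k w => p k w.1 w.2.1 w.2.2 with hPdef
  set Pt : Fin N → ℝ × ℝ × ℝ → ℝ := fun k w => pt k w.1 w.2.1 w.2.2 with hPtdef
  set Uf : ℝ × ℝ × ℝ → ℝ := fun w => u w.1 w.2.1 w.2.2 with hUfdef
  set Bf : ℝ × ℝ × ℝ → ℝ := fun w => B w.1 w.2.1 w.2.2 with hBfdef
  have hP : ∀ k, ContDiff ℝ (⊤ : ℕ∞) (P k) := hp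
  have hPt : ∀ k, ContDiff ℝ (⊤ : ℕ∞) (Pt k) := hpt
  have hU' : ∀ z : ℝ × ℝ × ℝ, Uf z = ∑ i, c i * (P i z - Pt i z) :=
    fun z => hu z.1 z.2.1 z.2.2
  have hB' : ∀ z : ℝ × ℝ × ℝ, Bf z = ∑ i, c i * (P i z ^ 2 - Pt i z ^ 2) :=
    fun z => hB z.1 z.2.1 z.2.2
  have hUs : ContDiff ℝ (⊤ : ℕ∞) Uf := by
    have h : Uf = fun w => ∑ i, c i * (P i w - Pt i w) := funext hU'
    rw [h]; exact ContDiff.sum fun i _ => contDiff_const.mul ((hP i).sub (hPt i))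
  have hBs : ContDiff ℝ (⊤ : ℕ∞) Bf := by
    have h : Bf = fun w => ∑ i, c i * (P i w ^ 2 - Pt i w ^ 2) := funext hB'
    rw [h]
    exact ContDiff.sum fun i _ => contDiff_const.mul (((hP i).pow 2).sub ((hPt i).pow 2))
  have hUd : Differentiable ℝ Uf := hUs.differentiable topLe
  -- translate the flow equations
  have hy' : ∀ k (z : ℝ × ℝ × ℝ), pd (0, 1, 0) (P k) z
      = pd (1, 0, 0) (fun w => P k w ^ 2 + 2 * Uf w) z := by
    rintro k ⟨a, b, d⟩
    rw [← deriv_slice2 ((hP k).differentiable topLe) a b d,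
      ← deriv_slice1 ((((hP k).pow 2).add (contDiff_const.mul hUs)).differentiable topLe) a b d]
    exact hsy k a b d
  have hyt' : ∀ k (z : ℝ × ℝ × ℝ), pd (0, 1, 0) (Pt k) z
      = pd (1, 0, 0) (fun w => Pt k w ^ 2 + 2 * Uf w) z := by
    rintro k ⟨a, b, d⟩
    rw [← deriv_slice2 ((hPt k).differentiable topLe) a b d,
      ← deriv_slice1 ((((hPt k).pow 2).add (contDiff_const.mul hUs)).differentiable topLe) a b d]
    exact hsyt k a b d
  have ht' : ∀ k (z : ℝ × ℝ × ℝ), pd (0, 0, 1) (P k) z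
      = pd (1, 0, 0) (fun w => P k w ^ 3 + 3 * P k w * Uf w + 3 / 2 * Bf w) z := by
    rintro k ⟨a, b, d⟩
    rw [← deriv_slice3 ((hP k).differentiable topLe) a b d,
      ← deriv_slice1 (((((hP k).pow 3).add ((contDiff_const.mul (hP k)).mul hUs)).add
        (contDiff_const.mul hBs)).differentiable topLe) a b d]
    exact hst k a b d
  have htt' : ∀ k (z : ℝ × ℝ × ℝ), pd (0, 0, 1) (Pt k) z
      = pd (1, 0, 0) (fun w => Pt k w ^ 3 + 3 * Pt k w * Uf w + 3 / 2 * Bf w) z := by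
    rintro k ⟨a, b, d⟩
    rw [← deriv_slice3 ((hPt k).differentiable topLe) a b d,
      ← deriv_slice1 (((((hPt k).pow 3).add ((contDiff_const.mul (hPt k)).mul hUs)).add
        (contDiff_const.mul hBs)).differentiable topLe) a b d]
    exact hstt k a b d
  -- rewrite the inner derivatives in the goal
  have g1 : ∀ a b d : ℝ, deriv (fun s => u a b s) d = pd (0, 0, 1) Uf (a, b, d) :=
    fun a b d => deriv_slice3 hUd a b d
  have g2 : ∀ a b d : ℝ, deriv (fun s => u s b d) a = pd (1, 0, 0) Uf (a, b, d) :=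
    fun a b d => deriv_slice1 hUd a b d
  have g3 : ∀ a b d : ℝ, deriv (fun s => u a s d) b = pd (0, 1, 0) Uf (a, b, d) :=
    fun a b d => deriv_slice2 hUd a b d
  simp only [g1, g2, g3]
  have r1 : deriv (fun x' => pd (0, 0, 1) Uf (x', y, t)
        - 3 * u x' y t * pd (1, 0, 0) Uf (x', y, t)) x
      = pd (1, 0, 0) (fun w => pd (0, 0, 1) Uf w - 3 * Uf w * pd (1, 0, 0) Uf w) (x, y, t) :=
    deriv_slice1 (((pd_smooth hUs (0, 0, 1)).sub
      ((contDiff_const.mul hUs).mul (pd_smooth hUs (1, 0, 0)))).differentiable topLe) x y t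
  have r2 : deriv (fun y' => pd (0, 1, 0) Uf (x, y', t)) y
      = pd (0, 1, 0) (pd (0, 1, 0) Uf) (x, y, t) :=
    deriv_slice2 ((pd_smooth hUs (0, 1, 0)).differentiable topLe) x y t
  rw [r1, r2]
  exact dkp_core c P Pt Uf Bf hP hPt hU' hB' hy' hyt' ht' htt' (x, y, t)
end

section
/- Let N ≥ 1 and let c₁,…,c_N be nonzero real constants. Define h⁺ : ℝ^N × ℝ^N → ℝ by h⁺(p, p̃) = Σ_{k=1}^N c_k ( e^{p_k} − e^{p̃_k} ). Then for every i = 1,…,N: Σ_{j=1}^N ( ∂h⁺/∂p_j + ∂h⁺/∂p̃_j ) + (1/c_i) ∂h⁺/∂p_i = e^{p_i} + Σ_{k=1}^N c_k ( e^{p_k} − e^{p̃_k} ), and Σ_{j=1}^N ( ∂h⁺/∂p_j + ∂h⁺/∂p̃_j ) − (1/c_i) ∂h⁺/∂p̃_i = e^{p̃_i} + Σ_{k=1}^N c_k ( e^{p_k} − e^{p̃_k} ). -/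
open Finset Function Real

theorem hasDerivAt_sum_update {𝕜 F ι : Type*} [NontriviallyNormedField 𝕜]
    [NormedAddCommGroup F] [NormedSpace 𝕜 F] [Fintype ι] [DecidableEq ι]
    (f : ι → 𝕜 → F) (x : ι → 𝕜) (j : ι) {f' : F} (hf : HasDerivAt (f j) f' (x j)) :
    HasDerivAt (fun s => ∑ k, f k (update x j s k)) f' (x j) := by
  have hsplit : (fun s => ∑ k, f k (update x j s k))
      = fun s => f j s + ∑ k ∈ univ.erase j, f k (x k) := by
    funext s
    rw [← add_sum_erase _ _ (mem_univ j), update_self]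
    congr 1
    exact sum_congr rfl fun k hk => by rw [update_of_ne (ne_of_mem_erase hk)]
  rw [hsplit]
  exact hf.add_const _

section Hamiltonian

variable {N : ℕ} (c : Fin N → ℝ) (p pt : Fin N → ℝ) (j : Fin N)

theorem deriv_hamiltonian_update_left :
    deriv (fun s => ∑ k, c k * (exp (update p j s k) - exp (pt k))) (p j)
      = c j * exp (p j) :=
  (hasDerivAt_sum_update (fun k t => c k * (exp t - exp (pt k))) p j
    (((hasDerivAt_exp _).sub_const _).const_mul _)).deriv

theorem deriv_hamiltonian_update_right :
    deriv (fun s => ∑ k, c k * (exp (p k) - exp (update pt j s k))) (pt j)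
      = -(c j * exp (pt j)) := by
  rw [(hasDerivAt_sum_update (fun k t => c k * (exp (p k) - exp t)) pt j
    (((hasDerivAt_exp _).const_sub _).const_mul _)).deriv, mul_neg]

end Hamiltonian

theorem stmt12_general
    (N : ℕ) (c : Fin N → ℝ) (hc : ∀ i, c i ≠ 0)
    (hplus : (Fin N → ℝ) → (Fin N → ℝ) → ℝ)
    (hdef : ∀ p pt, hplus p pt = ∑ k, c k * (Real.exp (p k) - Real.exp (pt k))) :
    ∀ (i : Fin N) (p pt : Fin N → ℝ),
      ((∑ j, (deriv (fun s => hplus (Function.update p j s) pt) (p j)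
          + deriv (fun s => hplus p (Function.update pt j s)) (pt j)))
        + (1 / c i) * deriv (fun s => hplus (Function.update p i s) pt) (p i)
        = Real.exp (p i) + ∑ k, c k * (Real.exp (p k) - Real.exp (pt k)))
      ∧ ((∑ j, (deriv (fun s => hplus (Function.update p j s) pt) (p j)
          + deriv (fun s => hplus p (Function.update pt j s)) (pt j)))
        - (1 / c i) * deriv (fun s => hplus p (Function.update pt i s)) (pt i)
        = Real.exp (pt i) + ∑ k, c k * (Real.exp (p k) - Real.exp (pt k))) := by
  intro i p pt
  obtain rfl : hplus = fun p pt => ∑ k, c k * (exp (p k) - exp (pt k)) :=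
    funext₂ hdef
  have gradient_sum : ∑ j, (c j * exp (p j) + -(c j * exp (pt j)))
      = ∑ k, c k * (exp (p k) - exp (pt k)) :=
    sum_congr rfl fun j _ => by ring
  simp only [deriv_hamiltonian_update_left, deriv_hamiltonian_update_right, gradient_sum]
  constructor <;> field_simp [hc i] <;> ring

/-- Hamiltonian form of the constrained d2DTL x-flow system (hydro3x): the
Hamiltonian operator `J = (E + diag(C⁻¹, -C⁻¹)) ∂_t` applied to the gradient of
the Hamiltonian density `h⁺ = ∑ cₖ (e^{pₖ} - e^{p̃ₖ})` recovers its right-hand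
sides. -/
theorem stmt12
    (N : ℕ) (hN : 1 ≤ N) (c : Fin N → ℝ) (hc : ∀ i, c i ≠ 0)
    (hplus : (Fin N → ℝ) → (Fin N → ℝ) → ℝ)
    (hdef : ∀ p pt, hplus p pt = ∑ k, c k * (Real.exp (p k) - Real.exp (pt k))) :
    ∀ (i : Fin N) (p pt : Fin N → ℝ),
      ((∑ j, (deriv (fun s => hplus (Function.update p j s) pt) (p j)
          + deriv (fun s => hplus p (Function.update pt j s)) (pt j)))
        + (1 / c i) * deriv (fun s => hplus (Function.update p i s) pt) (p i)
        = Real.exp (p i) + ∑ k, c k * (Real.exp (p k) - Real.exp (pt k)))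
      ∧ ((∑ j, (deriv (fun s => hplus (Function.update p j s) pt) (p j)
          + deriv (fun s => hplus p (Function.update pt j s)) (pt j)))
        - (1 / c i) * deriv (fun s => hplus p (Function.update pt i s)) (pt i)
        = Real.exp (pt i) + ∑ k, c k * (Real.exp (p k) - Real.exp (pt k))) :=
  stmt12_general N c hc hplus hdef
end

section
/- Let N ≥ 1 and let c₁,…,c_N be nonzero real constants. Define h⁻ : ℝ^N × ℝ^N → ℝ by h⁻(p, p̃) = exp( Σ_{k=1}^N c_k (p_k − p̃_k) ) · Σ_{k=1}^N c_k ( e^{−p̃_k} − e^{−p_k} ). Then for every i = 1,…,N: Σ_{j=1}^N ( ∂h⁻/∂p_j + ∂h⁻/∂p̃_j ) + (1/c_i) ∂h⁻/∂p_i = exp( −p_i + Σ_{k=1}^N c_k (p_k − p̃_k) ), and Σ_{j=1}^N ( ∂h⁻/∂p_j + ∂h⁻/∂p̃_j ) − (1/c_i) ∂h⁻/∂p̃_i = exp( −p̃_i + Σ_{k=1}^N c_k (p_k − p̃_k) ). -/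
private lemma sum_upd {N : ℕ} (f : Fin N → ℝ) (j : Fin N) (v : ℝ) :
    ∑ k, Function.update f j v k = (∑ k, f k) - f j + v := by
  rw [Finset.sum_update_of_mem (Finset.mem_univ j)]
  have := Finset.sum_eq_sum_sdiff_singleton_add (Finset.mem_univ j) f
  linarith

private lemma deriv_aux (a b d e x : ℝ) :
    deriv (fun s => Real.exp (a + b * s) * (d + e * Real.exp (-s))) x
      = b * Real.exp (a + b * x) * (d + e * Real.exp (-x))
        - Real.exp (a + b * x) * (e * Real.exp (-x)) := by
  have h1 : HasDerivAt (fun s : ℝ => a + b * s) b x := by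
    simpa using ((hasDerivAt_id x).const_mul b).const_add a
  have h2 : HasDerivAt (fun s : ℝ => d + e * Real.exp (-s))
      (e * (Real.exp (-x) * (-1))) x := by
    have h : HasDerivAt (fun s : ℝ => Real.exp (-s)) (Real.exp (-x) * (-1)) x :=
      ((hasDerivAt_id x).neg).exp
    exact (h.const_mul e).const_add d
  have := (h1.exp.mul h2).deriv
  rw [show (fun s => Real.exp (a + b * s) * (d + e * Real.exp (-s))) = ((fun x => Real.exp (a + b * x)) * fun s => d + e * Real.exp (-s)) from rfl, this]; ring

/-- Hamiltonian form of the constrained d2DTL y-flow system (hydro3y): the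
Hamiltonian operator `J = (E + diag(C⁻¹, -C⁻¹)) ∂_t` applied to the gradient of
the Hamiltonian density `h⁻ = exp(∑ cₖ (pₖ - p̃ₖ)) ∑ cₖ (e^{-p̃ₖ} - e^{-pₖ})`
recovers its right-hand sides. -/
theorem stmt13
    (N : ℕ) (hN : 1 ≤ N) (c : Fin N → ℝ) (hc : ∀ i, c i ≠ 0)
    (hminus : (Fin N → ℝ) → (Fin N → ℝ) → ℝ)
    (hdef : ∀ p pt, hminus p pt = Real.exp (∑ k, c k * (p k - pt k))
      * ∑ k, c k * (Real.exp (-(pt k)) - Real.exp (-(p k)))) :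
    ∀ (i : Fin N) (p pt : Fin N → ℝ),
      ((∑ j, (deriv (fun s => hminus (Function.update p j s) pt) (p j)
          + deriv (fun s => hminus p (Function.update pt j s)) (pt j)))
        + (1 / c i) * deriv (fun s => hminus (Function.update p i s) pt) (p i)
        = Real.exp (-(p i) + ∑ k, c k * (p k - pt k)))
      ∧ ((∑ j, (deriv (fun s => hminus (Function.update p j s) pt) (p j)
          + deriv (fun s => hminus p (Function.update pt j s)) (pt j)))
        - (1 / c i) * deriv (fun s => hminus p (Function.update pt i s)) (pt i)
        = Real.exp (-(pt i) + ∑ k, c k * (p k - pt k))) := by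
  intro i p pt
  set S : ℝ := ∑ k, c k * (p k - pt k) with hS
  set T : ℝ := ∑ k, c k * (Real.exp (-(pt k)) - Real.exp (-(p k))) with hT
  -- derivative in p_j
  have dP : ∀ j : Fin N, deriv (fun s => hminus (Function.update p j s) pt) (p j)
      = c j * Real.exp S * (T + Real.exp (-(p j))) := by
    intro j
    have hfun : (fun s => hminus (Function.update p j s) pt)
        = fun s => Real.exp ((S - c j * p j) + c j * s)
            * ((T + c j * Real.exp (-(p j))) + (-(c j)) * Real.exp (-s)) := by
      funext s
      rw [hdef]
      congr 1
      · congr 1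
        have h1 : (fun k => c k * (Function.update p j s k - pt k))
            = Function.update (fun k => c k * (p k - pt k)) j (c j * (s - pt j)) := by
          funext k
          rcases eq_or_ne k j with rfl | h
          · simp
          · simp [Function.update_of_ne h]
        rw [h1, sum_upd]; ring
      · have h2 : (fun k => c k * (Real.exp (-(pt k)) - Real.exp (-(Function.update p j s k))))
            = Function.update (fun k => c k * (Real.exp (-(pt k)) - Real.exp (-(p k)))) j
                (c j * (Real.exp (-(pt j)) - Real.exp (-s))) := by
          funext k
          rcases eq_or_ne k j with rfl | h
          · simp
          · simp [Function.update_of_ne h]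
        rw [h2, sum_upd]; ring
    rw [hfun, deriv_aux]
    have hx : (S - c j * p j) + c j * p j = S := by ring
    rw [hx]; ring
  -- derivative in pt_j
  have dPt : ∀ j : Fin N, deriv (fun s => hminus p (Function.update pt j s)) (pt j)
      = -(c j) * Real.exp S * (T + Real.exp (-(pt j))) := by
    intro j
    have hfun : (fun s => hminus p (Function.update pt j s))
        = fun s => Real.exp ((S + c j * pt j) + (-(c j)) * s)
            * ((T - c j * Real.exp (-(pt j))) + (c j) * Real.exp (-s)) := by
      funext s
      rw [hdef]
      congr 1
      · congr 1
        have h1 : (fun k => c k * (p k - Function.update pt j s k))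
            = Function.update (fun k => c k * (p k - pt k)) j (c j * (p j - s)) := by
          funext k
          rcases eq_or_ne k j with rfl | h
          · simp
          · simp [Function.update_of_ne h]
        rw [h1, sum_upd]; ring
      · have h2 : (fun k => c k * (Real.exp (-(Function.update pt j s k)) - Real.exp (-(p k))))
            = Function.update (fun k => c k * (Real.exp (-(pt k)) - Real.exp (-(p k)))) j
                (c j * (Real.exp (-s) - Real.exp (-(p j)))) := by
          funext k
          rcases eq_or_ne k j with rfl | h
          · simp
          · simp [Function.update_of_ne h]
        rw [h2, sum_upd]; ring
    rw [hfun, deriv_aux]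
    have hx : (S + c j * pt j) + (-(c j)) * pt j = S := by ring
    rw [hx]; ring
  have hsum : (∑ j, (deriv (fun s => hminus (Function.update p j s) pt) (p j)
      + deriv (fun s => hminus p (Function.update pt j s)) (pt j)))
      = - Real.exp S * T := by
    have : ∀ j : Fin N, deriv (fun s => hminus (Function.update p j s) pt) (p j)
        + deriv (fun s => hminus p (Function.update pt j s)) (pt j)
        = - Real.exp S * (c j * (Real.exp (-(pt j)) - Real.exp (-(p j)))) := by
      intro j; rw [dP j, dPt j]; ring
    rw [Finset.sum_congr rfl (fun j _ => this j), ← Finset.mul_sum, ← hT]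
  constructor
  · rw [hsum, dP i, Real.exp_add]
    have h1 : (1 / c i) * (c i * Real.exp S * (T + Real.exp (-(p i))))
        = Real.exp S * (T + Real.exp (-(p i))) := by
      field_simp
      rw [mul_div_cancel_left₀ _ (hc i)]
    rw [h1]; ring
  · rw [hsum, dPt i, Real.exp_add]
    have h1 : (1 / c i) * (-(c i) * Real.exp S * (T + Real.exp (-(pt i))))
        = -(Real.exp S * (T + Real.exp (-(pt i)))) := by
      field_simp
      rw [mul_div_cancel_left₀ _ (hc i)]
    rw [h1]; ring
end

section
/- Let N ≥ 1, let c₁,…,c_N be real constants, and let p₁,…,p_N, p̃₁,…,p̃_N be C¹ real-valued functions of (t,y) ∈ ℝ² satisfying the constrained d2DTL y-flow system: ∂_y p_i = ∂_t exp(−p_i + A) and ∂_y p̃_i = ∂_t exp(−p̃_i + A) for all i, where A = Σ_{k=1}^N c_k (p_k − p̃_k). Then B := Σ_{k=1}^N c_k ( e^{p_k} − e^{p̃_k} ) satisfies ∂_y B = − ∂_t ( e^{A} ). -/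
/-- For solutions of the constrained d2DTL y-flow system (hydro3y), the quantity
`B = ∑ cₖ (e^{pₖ} - e^{p̃ₖ})` satisfies `∂_y B = -∂_t (e^A)` with
`A = ∑ cₖ (pₖ - p̃ₖ)`. Variables are `(t, y)`. -/
theorem stmt15
    (N : ℕ) (hN : 1 ≤ N) (c : Fin N → ℝ)
    (p pt : Fin N → ℝ → ℝ → ℝ)
    (hp : ∀ k, ContDiff ℝ 1 (fun v : ℝ × ℝ => p k v.1 v.2))
    (hpt : ∀ k, ContDiff ℝ 1 (fun v : ℝ × ℝ => pt k v.1 v.2))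
    (A : ℝ → ℝ → ℝ)
    (hA : ∀ t y, A t y = ∑ k, c k * (p k t y - pt k t y))
    (hsys : ∀ i t y, deriv (fun y' => p i t y') y
      = deriv (fun t' => Real.exp (-(p i t' y) + A t' y)) t)
    (hsyst : ∀ i t y, deriv (fun y' => pt i t y') y
      = deriv (fun t' => Real.exp (-(pt i t' y) + A t' y)) t) :
    ∀ t y, deriv (fun y' => ∑ k, c k * (Real.exp (p k t y') - Real.exp (pt k t y'))) y
      = - deriv (fun t' => Real.exp (A t' y)) t := by
  intro t y
  -- differentiability of p, pt in each variable
  have hdp : ∀ (k : Fin N) (a b : ℝ), DifferentiableAt ℝ (fun t' => p k t' b) a := by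
    intro k a b
    exact (((hp k).differentiable one_ne_zero) (a, b)).comp a
      (differentiableAt_id.prodMk (differentiableAt_const b) : DifferentiableAt ℝ (fun t' : ℝ => (t', b)) a)
  have hdpt : ∀ (k : Fin N) (a b : ℝ), DifferentiableAt ℝ (fun t' => pt k t' b) a := by
    intro k a b
    exact (((hpt k).differentiable one_ne_zero) (a, b)).comp a
      (differentiableAt_id.prodMk (differentiableAt_const b) : DifferentiableAt ℝ (fun t' : ℝ => (t', b)) a)
  have hdpy : ∀ (k : Fin N) (a b : ℝ), DifferentiableAt ℝ (fun y' => p k a y') b := by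
    intro k a b
    exact (((hp k).differentiable one_ne_zero) (a, b)).comp b
      ((differentiableAt_const a).prodMk differentiableAt_id)
  have hdpty : ∀ (k : Fin N) (a b : ℝ), DifferentiableAt ℝ (fun y' => pt k a y') b := by
    intro k a b
    exact (((hpt k).differentiable one_ne_zero) (a, b)).comp b
      ((differentiableAt_const a).prodMk differentiableAt_id)
  have hAfun : ∀ b : ℝ, (fun t' => A t' b)
      = fun t' => ∑ k, c k * (p k t' b - pt k t' b) := by
    intro b; funext t'; exact hA t' b
  -- derivative of A in t
  set dp : Fin N → ℝ := fun k => deriv (fun t' => p k t' y) t with hdpdef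
  set dpt : Fin N → ℝ := fun k => deriv (fun t' => pt k t' y) t with hdptdef
  have hAder : HasDerivAt (fun t' => A t' y) (∑ k, c k * (dp k - dpt k)) t := by
    rw [hAfun y]
    exact HasDerivAt.fun_sum fun k _ =>
      (((hdp k t y).hasDerivAt.sub (hdpt k t y).hasDerivAt).const_mul (c k))
  set dA : ℝ := ∑ k, c k * (dp k - dpt k) with hdAdef
  -- the y-derivatives of p and pt via the system
  have key : ∀ k : Fin N, deriv (fun y' => p k t y') y
      = Real.exp (-(p k t y) + A t y) * (-(dp k) + dA) := by
    intro k
    rw [hsys k t y]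
    exact ((((hdp k t y).hasDerivAt.neg).add hAder).exp).deriv
  have keyt : ∀ k : Fin N, deriv (fun y' => pt k t y') y
      = Real.exp (-(pt k t y) + A t y) * (-(dpt k) + dA) := by
    intro k
    rw [hsyst k t y]
    exact ((((hdpt k t y).hasDerivAt.neg).add hAder).exp).deriv
  -- LHS
  have hL : deriv (fun y' => ∑ k, c k * (Real.exp (p k t y') - Real.exp (pt k t y'))) y
      = ∑ k, c k * (Real.exp (p k t y) * deriv (fun y' => p k t y') y
          - Real.exp (pt k t y) * deriv (fun y' => pt k t y') y) := by
    refine (HasDerivAt.fun_sum fun k _ => ?_).deriv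
    exact (((hdpy k t y).hasDerivAt.exp.sub (hdpty k t y).hasDerivAt.exp).const_mul (c k))
  -- RHS
  have hR : deriv (fun t' => Real.exp (A t' y)) t = Real.exp (A t y) * dA :=
    hAder.exp.deriv
  rw [hL, hR]
  have hterm : ∀ k : Fin N,
      c k * (Real.exp (p k t y) * deriv (fun y' => p k t y') y
        - Real.exp (pt k t y) * deriv (fun y' => pt k t y') y)
      = Real.exp (A t y) * (c k * (dpt k - dp k)) := by
    intro k
    rw [key k, keyt k, Real.exp_add, Real.exp_add, Real.exp_neg, Real.exp_neg]
    field_simp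
    ring
  rw [Finset.sum_congr rfl fun k _ => hterm k, ← Finset.mul_sum, hdAdef]
  have hsum : ∑ i : Fin N, c i * (dpt i - dp i) = -∑ k : Fin N, c k * (dp k - dpt k) := by
    rw [← Finset.sum_neg_distrib]
    exact Finset.sum_congr rfl fun k _ => by ring
  rw [hsum, mul_neg]
end

section
/- Let N ≥ 1, let c₁,…,c_N be real constants, and let p₁,…,p_N, p̃₁,…,p̃_N be smooth real-valued functions of (t,x,y) ∈ ℝ³ satisfying both the constrained d2DTL x-flow system ∂_x p_i = ∂_t(e^{p_i} + B), ∂_x p̃_i = ∂_t(e^{p̃_i} + B) and the constrained d2DTL y-flow system ∂_y p_i = ∂_t exp(−p_i + A), ∂_y p̃_i = ∂_t exp(−p̃_i + A) for all i, where A = Σ_{k=1}^N c_k (p_k − p̃_k) and B = Σ_{k=1}^N c_k (e^{p_k} − e^{p̃_k}). Then A solves the dispersionless 2D Toda lattice equation: ∂_x ∂_y A + ∂_t ∂_t ( e^{A} ) = 0. -/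
open Real
abbrev EE := ℝ × ℝ × ℝ
noncomputable def dd (F : EE → ℝ) (v : EE) : EE → ℝ := fun w => fderiv ℝ F w v

lemma cdiff {f : EE → ℝ} (hf : ContDiff ℝ (⊤:ℕ∞) f) (w : EE) : DifferentiableAt ℝ f w :=
  (hf.differentiable (by simp)).differentiableAt

lemma dd_add {f g : EE → ℝ} (hf : ContDiff ℝ (⊤:ℕ∞) f) (hg : ContDiff ℝ (⊤:ℕ∞) g) (v w : EE) :
    dd (fun z => f z + g z) v w = dd f v w + dd g v w := by
  simp [dd, fderiv_fun_add (cdiff hf w) (cdiff hg w)]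

lemma dd_exp {f : EE → ℝ} (hf : ContDiff ℝ (⊤:ℕ∞) f) (v w : EE) :
    dd (fun z => Real.exp (f z)) v w = Real.exp (f w) * dd f v w := by
  simp [dd, fderiv_exp (cdiff hf w)]

lemma dd_csum {N : ℕ} (c : Fin N → ℝ) (f g : Fin N → EE → ℝ)
    (hf : ∀ k, ContDiff ℝ (⊤:ℕ∞) (f k)) (hg : ∀ k, ContDiff ℝ (⊤:ℕ∞) (g k)) (v w : EE) :
    dd (fun z => ∑ k, c k * (f k z - g k z)) v w
      = ∑ k, c k * (dd (f k) v w - dd (g k) v w) := by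
  have h1 : ∀ k : Fin N, DifferentiableAt ℝ (fun z => c k * (f k z - g k z)) w :=
    fun k => (((cdiff (hf k) w).sub (cdiff (hg k) w)).const_mul _)
  simp only [dd, fderiv_fun_sum (fun k _ => h1 k), ContinuousLinearMap.sum_apply]
  refine Finset.sum_congr rfl fun k _ => ?_
  rw [fderiv_const_mul (a := fun z => f k z - g k z) ((cdiff (hf k) w).sub (cdiff (hg k) w)),
    fderiv_fun_sub (cdiff (hf k) w) (cdiff (hg k) w)]
  simp

lemma dd_neg {f : EE → ℝ} (v w : EE) :
    dd (fun z => -(f z)) v w = -(dd f v w) := by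
  simp [dd, fderiv_neg]

lemma contDiff_dd {F : EE → ℝ} (hF : ContDiff ℝ (⊤:ℕ∞) F) (v : EE) :
    ContDiff ℝ (⊤:ℕ∞) (dd F v) := by
  have h1 : ContDiff ℝ (⊤:ℕ∞) (fderiv ℝ F) := hF.fderiv_right (by exact_mod_cast le_refl _)
  exact (((ContinuousLinearMap.apply ℝ ℝ) v).contDiff).comp h1

lemma sliceT_s16 {F : EE → ℝ} (hF : ContDiff ℝ (⊤:ℕ∞) F) (t x y : ℝ) :
    deriv (fun t' => F (t', x, y)) t = dd F (1,0,0) (t,x,y) := by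
  have hl : HasDerivAt (fun t' : ℝ => ((t', x, y) : EE)) (1,0,0) t :=
    (hasDerivAt_id t).prodMk (hasDerivAt_const t (x,y))
  exact (((cdiff hF (t,x,y)).hasFDerivAt).comp_hasDerivAt t hl).deriv

lemma sliceX_s16 {F : EE → ℝ} (hF : ContDiff ℝ (⊤:ℕ∞) F) (t x y : ℝ) :
    deriv (fun x' => F (t, x', y)) x = dd F (0,1,0) (t,x,y) := by
  have hl : HasDerivAt (fun x' : ℝ => ((t, x', y) : EE)) (0,1,0) x :=
    (hasDerivAt_const x t).prodMk ((hasDerivAt_id x).prodMk (hasDerivAt_const x y))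
  exact (((cdiff hF (t,x,y)).hasFDerivAt).comp_hasDerivAt x hl).deriv

lemma sliceY_s16 {F : EE → ℝ} (hF : ContDiff ℝ (⊤:ℕ∞) F) (t x y : ℝ) :
    deriv (fun y' => F (t, x, y')) y = dd F (0,0,1) (t,x,y) := by
  have hl : HasDerivAt (fun y' : ℝ => ((t, x, y') : EE)) (0,0,1) y :=
    (hasDerivAt_const y t).prodMk ((hasDerivAt_const y x).prodMk (hasDerivAt_id y))
  exact (((cdiff hF (t,x,y)).hasFDerivAt).comp_hasDerivAt y hl).deriv

lemma dd_comm {F : EE → ℝ} (hF : ContDiff ℝ (⊤:ℕ∞) F) (w u v : EE) :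
    fderiv ℝ (dd F u) w v = fderiv ℝ (dd F v) w u := by
  have hF' : ContDiff ℝ (⊤:ℕ∞) (fderiv ℝ F) := hF.fderiv_right (by exact_mod_cast le_refl _)
  have hd : ∀ z, HasFDerivAt F (fderiv ℝ F z) z := fun z => (cdiff hF z).hasFDerivAt
  have hd' : HasFDerivAt (fderiv ℝ F) (fderiv ℝ (fderiv ℝ F) w) w :=
    (hF'.differentiable (by simp) w).hasFDerivAt
  have key : ∀ a : EE, fderiv ℝ (dd F a) w
      = ((ContinuousLinearMap.apply ℝ ℝ a).comp (fderiv ℝ (fderiv ℝ F) w)) := fun a =>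
    (((ContinuousLinearMap.apply ℝ ℝ a).hasFDerivAt).comp w hd').fderiv
  rw [key, key]
  exact second_derivative_symmetric hd hd' v u

lemma key_s16 (N : ℕ) (c : Fin N → ℝ) (P Pt : Fin N → EE → ℝ)
    (hPc : ∀ k, ContDiff ℝ (⊤:ℕ∞) (P k)) (hPtc : ∀ k, ContDiff ℝ (⊤:ℕ∞) (Pt k))
    (FA FB FD FE : EE → ℝ)
    (hFAeq : FA = fun w => ∑ k, c k * (P k w - Pt k w))
    (hFBeq : FB = fun w => ∑ k, c k * (Real.exp (P k w) - Real.exp (Pt k w)))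
    (hFDeq : FD = fun z => ∑ k, c k * (Real.exp (-(P k z) + FA z) - Real.exp (-(Pt k z) + FA z)))
    (hFEeq : FE = fun z => Real.exp (FA z))
    (hx : ∀ i w, dd (P i) (0,1,0) w = dd (fun z => Real.exp (P i z) + FB z) (1,0,0) w)
    (hxt : ∀ i w, dd (Pt i) (0,1,0) w = dd (fun z => Real.exp (Pt i z) + FB z) (1,0,0) w)
    (hy : ∀ i w, dd (P i) (0,0,1) w = dd (fun z => Real.exp (-(P i z) + FA z)) (1,0,0) w)
    (hyt : ∀ i w, dd (Pt i) (0,0,1) w = dd (fun z => Real.exp (-(Pt i z) + FA z)) (1,0,0) w)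
    (w : EE) :
    fderiv ℝ (dd FA (0,0,1)) w (0,1,0) + fderiv ℝ (dd FE (1,0,0)) w (1,0,0) = 0 := by
  have hFAc : ContDiff ℝ (⊤:ℕ∞) FA := by
    rw [hFAeq]; exact ContDiff.sum fun k _ => contDiff_const.mul ((hPc k).sub (hPtc k))
  have hFBc : ContDiff ℝ (⊤:ℕ∞) FB := by
    rw [hFBeq]
    exact ContDiff.sum fun k _ => contDiff_const.mul
      ((Real.contDiff_exp.comp (hPc k)).sub (Real.contDiff_exp.comp (hPtc k)))
  have hQc : ∀ k, ContDiff ℝ (⊤:ℕ∞) (fun z => Real.exp (-(P k z) + FA z)) :=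
    fun k => Real.contDiff_exp.comp ((hPc k).neg.add hFAc)
  have hQtc : ∀ k, ContDiff ℝ (⊤:ℕ∞) (fun z => Real.exp (-(Pt k z) + FA z)) :=
    fun k => Real.contDiff_exp.comp ((hPtc k).neg.add hFAc)
  have hFDc : ContDiff ℝ (⊤:ℕ∞) FD := by
    rw [hFDeq]; exact ContDiff.sum fun k _ => contDiff_const.mul ((hQc k).sub (hQtc k))
  have hFEc : ContDiff ℝ (⊤:ℕ∞) FE := by rw [hFEeq]; exact Real.contDiff_exp.comp hFAc
  -- expansions
  have eFA : ∀ (v w : EE), dd FA v w = ∑ k, c k * (dd (P k) v w - dd (Pt k) v w) := by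
    intro v w; rw [hFAeq]; exact dd_csum c P Pt hPc hPtc v w
  have eFB : ∀ w : EE, dd FB (1,0,0) w
      = ∑ k, c k * (Real.exp (P k w) * dd (P k) (1,0,0) w
          - Real.exp (Pt k w) * dd (Pt k) (1,0,0) w) := by
    intro w
    rw [hFBeq]
    have h0 : dd (fun w => ∑ k, c k * (Real.exp (P k w) - Real.exp (Pt k w))) (1,0,0) w
        = ∑ k, c k * (dd (fun z => Real.exp (P k z)) (1,0,0) w
            - dd (fun z => Real.exp (Pt k z)) (1,0,0) w) :=
      dd_csum c (fun k z => Real.exp (P k z)) (fun k z => Real.exp (Pt k z))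
        (fun k => Real.contDiff_exp.comp (hPc k)) (fun k => Real.contDiff_exp.comp (hPtc k)) _ w
    rw [h0]
    exact Finset.sum_congr rfl fun k _ => by rw [dd_exp (hPc k), dd_exp (hPtc k)]
  have ePx : ∀ k (w : EE), dd (P k) (0,1,0) w
      = Real.exp (P k w) * dd (P k) (1,0,0) w + dd FB (1,0,0) w := by
    intro k w
    calc dd (P k) (0,1,0) w = dd (fun z => Real.exp (P k z) + FB z) (1,0,0) w := hx k w
      _ = dd (fun z => Real.exp (P k z)) (1,0,0) w + dd FB (1,0,0) w :=
          dd_add (Real.contDiff_exp.comp (hPc k)) hFBc _ w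
      _ = _ := by rw [dd_exp (hPc k)]
  have ePtx : ∀ k (w : EE), dd (Pt k) (0,1,0) w
      = Real.exp (Pt k w) * dd (Pt k) (1,0,0) w + dd FB (1,0,0) w := by
    intro k w
    calc dd (Pt k) (0,1,0) w = dd (fun z => Real.exp (Pt k z) + FB z) (1,0,0) w := hxt k w
      _ = dd (fun z => Real.exp (Pt k z)) (1,0,0) w + dd FB (1,0,0) w :=
          dd_add (Real.contDiff_exp.comp (hPtc k)) hFBc _ w
      _ = _ := by rw [dd_exp (hPtc k)]
  have hAx : ∀ w : EE, dd FA (0,1,0) w = dd FB (1,0,0) w := by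
    intro w
    rw [eFA, eFB]
    refine Finset.sum_congr rfl fun k _ => ?_
    rw [ePx k w, ePtx k w]; ring
  have eQ : ∀ k (v w : EE), dd (fun z => Real.exp (-(P k z) + FA z)) v w
      = Real.exp (-(P k w) + FA w) * (-(dd (P k) v w) + dd FA v w) := by
    intro k v w
    calc dd (fun z => Real.exp (-(P k z) + FA z)) v w
        = Real.exp (-(P k w) + FA w) * dd (fun z => -(P k z) + FA z) v w :=
          dd_exp ((hPc k).neg.add hFAc) v w
      _ = _ := by
          rw [show dd (fun z => -(P k z) + FA z) v w
                = dd (fun z => -(P k z)) v w + dd FA v w from dd_add (hPc k).neg hFAc v w,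
              show dd (fun z => -(P k z)) v w = -(dd (P k) v w) from dd_neg v w]
  have eQt : ∀ k (v w : EE), dd (fun z => Real.exp (-(Pt k z) + FA z)) v w
      = Real.exp (-(Pt k w) + FA w) * (-(dd (Pt k) v w) + dd FA v w) := by
    intro k v w
    calc dd (fun z => Real.exp (-(Pt k z) + FA z)) v w
        = Real.exp (-(Pt k w) + FA w) * dd (fun z => -(Pt k z) + FA z) v w :=
          dd_exp ((hPtc k).neg.add hFAc) v w
      _ = _ := by
          rw [show dd (fun z => -(Pt k z) + FA z) v w
                = dd (fun z => -(Pt k z)) v w + dd FA v w from dd_add (hPtc k).neg hFAc v w,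
              show dd (fun z => -(Pt k z)) v w = -(dd (Pt k) v w) from dd_neg v w]
  have eFD : ∀ (v w : EE), dd FD v w
      = ∑ k, c k * (dd (fun z => Real.exp (-(P k z) + FA z)) v w
          - dd (fun z => Real.exp (-(Pt k z) + FA z)) v w) := by
    intro v w
    rw [hFDeq]
    exact dd_csum c (fun k z => Real.exp (-(P k z) + FA z))
      (fun k z => Real.exp (-(Pt k z) + FA z)) hQc hQtc v w
  have eFE : ∀ w : EE, dd FE (1,0,0) w = Real.exp (FA w) * dd FA (1,0,0) w := by
    intro w; rw [hFEeq]; exact dd_exp hFAc _ w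
  have hDx : ∀ w : EE, dd FD (0,1,0) w = -(dd FE (1,0,0) w) := by
    intro w
    rw [eFD, eFE, eFA (1,0,0) w, Finset.mul_sum, ← Finset.sum_neg_distrib]
    refine Finset.sum_congr rfl fun k _ => ?_
    rw [eQ k _ w, eQt k _ w, ePx k w, ePtx k w, hAx w]
    have m1 : Real.exp (-(P k w) + FA w) * Real.exp (P k w) = Real.exp (FA w) := by
      rw [← Real.exp_add]; congr 1; ring
    have m2 : Real.exp (-(Pt k w) + FA w) * Real.exp (Pt k w) = Real.exp (FA w) := by
      rw [← Real.exp_add]; congr 1; ring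
    linear_combination (-(c k * dd (P k) (1,0,0) w)) * m1 + (c k * dd (Pt k) (1,0,0) w) * m2
  have hAy : ∀ w : EE, dd FA (0,0,1) w = dd FD (1,0,0) w := by
    intro w
    rw [eFA, eFD]
    exact Finset.sum_congr rfl fun k _ => by rw [hy k w, hyt k w]
  have h1 : dd FA (0,0,1) = dd FD (1,0,0) := funext hAy
  have h2 : dd FD (0,1,0) = fun z => -(dd FE (1,0,0) z) := funext hDx
  rw [h1, dd_comm hFDc w (1,0,0) (0,1,0), h2]
  have h3 : fderiv ℝ (fun z => -(dd FE (1,0,0) z)) w (1,0,0)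
      = -(fderiv ℝ (dd FE (1,0,0)) w (1,0,0)) := dd_neg (1,0,0) w
  rw [h3]
  exact neg_add_cancel _

/-- A common solution of the constrained d2DTL x-flow system (hydro3x) and y-flow
system (hydro3y) generates a solution `A = ∑ cₖ (pₖ - p̃ₖ)` of the dispersionless
2D Toda lattice equation `∂_x ∂_y A + ∂_t ∂_t (e^A) = 0`. Variables are `(t, x, y)`. -/
theorem stmt16
    (N : ℕ) (hN : 1 ≤ N) (c : Fin N → ℝ)
    (p pt : Fin N → ℝ → ℝ → ℝ → ℝ)
    (hp : ∀ k, ContDiff ℝ (⊤ : ℕ∞) (fun w : ℝ × ℝ × ℝ => p k w.1 w.2.1 w.2.2))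
    (hpt : ∀ k, ContDiff ℝ (⊤ : ℕ∞) (fun w : ℝ × ℝ × ℝ => pt k w.1 w.2.1 w.2.2))
    (A B : ℝ → ℝ → ℝ → ℝ)
    (hA : ∀ t x y, A t x y = ∑ k, c k * (p k t x y - pt k t x y))
    (hB : ∀ t x y, B t x y = ∑ k, c k * (Real.exp (p k t x y) - Real.exp (pt k t x y)))
    -- the constrained d2DTL x-flow system (hydro3x)
    (hsx : ∀ i t x y, deriv (fun x' => p i t x' y) x
      = deriv (fun t' => Real.exp (p i t' x y) + B t' x y) t)
    (hsxt : ∀ i t x y, deriv (fun x' => pt i t x' y) x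
      = deriv (fun t' => Real.exp (pt i t' x y) + B t' x y) t)
    -- the constrained d2DTL y-flow system (hydro3y)
    (hsy : ∀ i t x y, deriv (fun y' => p i t x y') y
      = deriv (fun t' => Real.exp (-(p i t' x y) + A t' x y)) t)
    (hsyt : ∀ i t x y, deriv (fun y' => pt i t x y') y
      = deriv (fun t' => Real.exp (-(pt i t' x y) + A t' x y)) t) :
    ∀ t x y,
      deriv (fun x' => deriv (fun y' => A t x' y') y) x
        + deriv (fun t' => deriv (fun t'' => Real.exp (A t'' x y)) t') t = 0 := by
  intro t x y
  have hFAeq : (fun w : EE => A w.1 w.2.1 w.2.2)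
      = fun w : EE => ∑ k, c k * (p k w.1 w.2.1 w.2.2 - pt k w.1 w.2.1 w.2.2) :=
    funext fun w => hA w.1 w.2.1 w.2.2
  have hFBeq : (fun w : EE => B w.1 w.2.1 w.2.2)
      = fun w : EE => ∑ k, c k * (Real.exp (p k w.1 w.2.1 w.2.2)
          - Real.exp (pt k w.1 w.2.1 w.2.2)) :=
    funext fun w => hB w.1 w.2.1 w.2.2
  have hFAc : ContDiff ℝ (⊤:ℕ∞) (fun w : EE => A w.1 w.2.1 w.2.2) := by
    rw [hFAeq]; exact ContDiff.sum fun k _ => contDiff_const.mul ((hp k).sub (hpt k))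
  have hFBc : ContDiff ℝ (⊤:ℕ∞) (fun w : EE => B w.1 w.2.1 w.2.2) := by
    rw [hFBeq]
    exact ContDiff.sum fun k _ => contDiff_const.mul
      ((Real.contDiff_exp.comp (hp k)).sub (Real.contDiff_exp.comp (hpt k)))
  have hFEc : ContDiff ℝ (⊤:ℕ∞) (fun w : EE => Real.exp (A w.1 w.2.1 w.2.2)) :=
    Real.contDiff_exp.comp hFAc
  -- translate the hypotheses to directional-derivative form
  have hx' : ∀ i (w : EE), dd (fun w : EE => p i w.1 w.2.1 w.2.2) (0,1,0) w
      = dd (fun z : EE => Real.exp (p i z.1 z.2.1 z.2.2) + B z.1 z.2.1 z.2.2) (1,0,0) w := by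
    intro i w
    obtain ⟨a, b, d⟩ := w
    rw [← sliceX_s16 (hp i) a b d,
      ← sliceT_s16 (F := fun z : EE => Real.exp (p i z.1 z.2.1 z.2.2) + B z.1 z.2.1 z.2.2)
        ((Real.contDiff_exp.comp (hp i)).add hFBc) a b d]
    exact hsx i a b d
  have hxt' : ∀ i (w : EE), dd (fun w : EE => pt i w.1 w.2.1 w.2.2) (0,1,0) w
      = dd (fun z : EE => Real.exp (pt i z.1 z.2.1 z.2.2) + B z.1 z.2.1 z.2.2) (1,0,0) w := by
    intro i w
    obtain ⟨a, b, d⟩ := w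
    rw [← sliceX_s16 (hpt i) a b d,
      ← sliceT_s16 (F := fun z : EE => Real.exp (pt i z.1 z.2.1 z.2.2) + B z.1 z.2.1 z.2.2)
        ((Real.contDiff_exp.comp (hpt i)).add hFBc) a b d]
    exact hsxt i a b d
  have hy' : ∀ i (w : EE), dd (fun w : EE => p i w.1 w.2.1 w.2.2) (0,0,1) w
      = dd (fun z : EE => Real.exp (-(p i z.1 z.2.1 z.2.2) + A z.1 z.2.1 z.2.2)) (1,0,0) w := by
    intro i w
    obtain ⟨a, b, d⟩ := w
    rw [← sliceY_s16 (hp i) a b d,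
      ← sliceT_s16 (F := fun z : EE => Real.exp (-(p i z.1 z.2.1 z.2.2) + A z.1 z.2.1 z.2.2))
        (Real.contDiff_exp.comp ((hp i).neg.add hFAc)) a b d]
    exact hsy i a b d
  have hyt' : ∀ i (w : EE), dd (fun w : EE => pt i w.1 w.2.1 w.2.2) (0,0,1) w
      = dd (fun z : EE => Real.exp (-(pt i z.1 z.2.1 z.2.2) + A z.1 z.2.1 z.2.2)) (1,0,0) w := by
    intro i w
    obtain ⟨a, b, d⟩ := w
    rw [← sliceY_s16 (hpt i) a b d,
      ← sliceT_s16 (F := fun z : EE => Real.exp (-(pt i z.1 z.2.1 z.2.2) + A z.1 z.2.1 z.2.2))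
        (Real.contDiff_exp.comp ((hpt i).neg.add hFAc)) a b d]
    exact hsyt i a b d
  -- rewrite the goal in directional-derivative form
  have h1 : (fun x' : ℝ => deriv (fun y' => A t x' y') y)
      = fun x' : ℝ => dd (fun w : EE => A w.1 w.2.1 w.2.2) (0,0,1) (t,x',y) :=
    funext fun x' => sliceY_s16 hFAc t x' y
  have h2 : (fun t' : ℝ => deriv (fun t'' => Real.exp (A t'' x y)) t')
      = fun t' : ℝ => dd (fun w : EE => Real.exp (A w.1 w.2.1 w.2.2)) (1,0,0) (t',x,y) :=
    funext fun t' => sliceT_s16 hFEc t' x y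
  rw [h1, h2, sliceX_s16 (contDiff_dd hFAc (0,0,1)) t x y,
    sliceT_s16 (contDiff_dd hFEc (1,0,0)) t x y]
  exact key_s16 N c (fun k w => p k w.1 w.2.1 w.2.2) (fun k w => pt k w.1 w.2.1 w.2.2) hp hpt
    (fun w : EE => A w.1 w.2.1 w.2.2) (fun w : EE => B w.1 w.2.1 w.2.2)
    (fun z : EE => ∑ k, c k * (Real.exp (-(p k z.1 z.2.1 z.2.2) + A z.1 z.2.1 z.2.2)
      - Real.exp (-(pt k z.1 z.2.1 z.2.2) + A z.1 z.2.1 z.2.2)))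
    (fun w : EE => Real.exp (A w.1 w.2.1 w.2.2))
    hFAeq hFBeq rfl rfl hx' hxt' hy' hyt' (t,x,y)
end
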